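/- arXiv:1501.07375 — 5 statements merged into one kernel-verified Lean document; each statement's English description precedes it below -/
import Mathlib

section
/- Suppose X is a c-quasiconvex metric space, G ⊊ X a domain, and γ a (ν,h)-solid arc in G with endpoints x, y such that min{δ_G(x), δ_G(y)} = r ≥ 3c|x−y|. Then diam(γ) ≤ max{μ₁|x−y|, 2r(e^h − 1)} where μ₁ = 6c(e^{2ν} − 1). -/
open Metric Set Filter

section QHDefs

variable {X : Type*} [MetricSpace X] {Y : Type*} [MetricSpace Y]

/-- Distance to the boundary of `G`. -/
noncomputable def bdist (G : Set X) (z : X) : ℝ := Metric.infDist z (frontier G)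

/-- A unit-speed (1-Lipschitz, arclength-parametrized) rectifiable curve in `G`
from `x` to `y`, parametrized on `[0, L]`, where `L` is its length. -/
structure CurveIn (G : Set X) (γ : ℝ → X) (L : ℝ) (x y : X) : Prop where
  nonneg : 0 ≤ L
  lip : LipschitzOnWith 1 γ (Set.Icc 0 L)
  source : γ 0 = x
  target : γ L = y
  mem : ∀ t ∈ Set.Icc 0 L, γ t ∈ G

/-- Quasihyperbolic length of the subcurve `γ|[s,t]` in `G`: `∫_γ |dz|/δ_G(z)`. -/
noncomputable def qhLengthOn (G : Set X) (γ : ℝ → X) (s t : ℝ) : ℝ :=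
  ∫ u in s..t, 1 / bdist G (γ u)

/-- Quasihyperbolic length of a curve parametrized on `[0,L]`. -/
noncomputable def qhLength (G : Set X) (γ : ℝ → X) (L : ℝ) : ℝ := qhLengthOn G γ 0 L

/-- Quasihyperbolic distance in `G`. -/
noncomputable def qhDist (G : Set X) (x y : X) : ℝ :=
  sInf {l | ∃ γ L, CurveIn G γ L x y ∧ qhLength G γ L = l}

/-- `X` is a `c`-quasiconvex metric space. -/
def QCSpace (c : ℝ) (X : Type*) [MetricSpace X] : Prop :=
  ∀ x y : X, ∃ γ L, CurveIn (Set.univ : Set X) γ L x y ∧ L ≤ c * dist x y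

/-- A set `G` is `c`-quasiconvex. -/
def QCSet (c : ℝ) (G : Set X) : Prop :=
  ∀ x ∈ G, ∀ y ∈ G, ∃ γ L, CurveIn G γ L x y ∧ L ≤ c * dist x y

/-- A domain: a nonempty connected open set. -/
def IsDomainSet (G : Set X) : Prop := IsOpen G ∧ IsConnected G

/-- A proper domain: a nonempty connected open set, different from the whole space. -/
def IsProperDomain (G : Set X) : Prop := IsOpen G ∧ IsConnected G ∧ G ≠ Set.univ

/-- `G` is an `a`-John domain: each pair of points is joined by a rectifiable arc
satisfying the cone condition. -/
def IsJohn (a : ℝ) (G : Set X) : Prop :=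
  ∀ x ∈ G, ∀ y ∈ G, ∃ γ L, CurveIn G γ L x y ∧
    ∀ t ∈ Set.Icc 0 L, min t (L - t) ≤ a * bdist G (γ t)

/-- `G` is a `b`-uniform domain: each pair of points is joined by a double `b`-cone arc. -/
def IsUniform (b : ℝ) (G : Set X) : Prop :=
  ∀ x ∈ G, ∀ y ∈ G, ∃ γ L, CurveIn G γ L x y ∧ L ≤ b * dist x y ∧
    ∀ t ∈ Set.Icc 0 L, min t (L - t) ≤ b * bdist G (γ t)

/-- `G` is a locally `a`-John domain. -/
def LocallyJohn (a : ℝ) (G : Set X) : Prop :=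
  ∀ x ∈ G, ∀ r : ℝ, 0 < r → r ≤ bdist G x → IsJohn a (Metric.ball x r)

/-- The `h`-coarse quasihyperbolic length of the subcurve `γ|[s,t]` in `G`:
the supremum of sums `Σ k_G(x_{j-1},x_j)` over `h`-coarse sequences of successive
points of the arc (with the convention that it is `0` if there are none). -/
noncomputable def coarseQHLength (G : Set X) (γ : ℝ → X) (s t h : ℝ) : ℝ :=
  sSup {S | ∃ n : ℕ, 0 < n ∧ ∃ u : ℕ → ℝ,
    (∀ i < n, u i ≤ u (i + 1)) ∧ (∀ i ≤ n, u i ∈ Set.Icc s t) ∧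
    (∀ i < n, h ≤ qhDist G (γ (u i)) (γ (u (i + 1)))) ∧
    S = ∑ i ∈ Finset.range n, qhDist G (γ (u i)) (γ (u (i + 1)))}

/-- `γ` (parametrized on `[0,L]`) is a `(ν,h)`-solid arc in `G`. -/
def SolidArc (G : Set X) (γ : ℝ → X) (L ν h : ℝ) : Prop :=
  ∀ s t : ℝ, 0 ≤ s → s ≤ t → t ≤ L →
    coarseQHLength G γ s t h ≤ ν * qhDist G (γ s) (γ t)

/-- `γ` (parametrized on `[0,L]`) is an `ε`-short arc in `G`. -/
def ShortArc (G : Set X) (γ : ℝ → X) (L ε : ℝ) : Prop :=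
  qhLength G γ L ≤ qhDist G (γ 0) (γ L) + ε

/-- A map is weakly `H`-quasisymmetric. -/
def WeakQS (H : ℝ) (f : X → Y) : Prop :=
  ∀ x a b : X, dist x a ≤ dist x b → dist (f x) (f a) ≤ H * dist (f x) (f b)

/-- Image of a subset `D ⊆ G` under a homeomorphism `f : G ≃ₜ G'`, as a subset of `Y`. -/
def imSet {G : Set X} {G' : Set Y} (f : ↥G ≃ₜ ↥G') (D : Set X) : Set Y :=
  Subtype.val '' (f '' (Subtype.val ⁻¹' D))

/-- `f : G ≃ₜ G'` is `M`-quasihyperbolic. -/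
def MQH (M : ℝ) {G : Set X} {G' : Set Y} (f : ↥G ≃ₜ ↥G') : Prop :=
  ∀ x y : ↥G, (1 / M) * qhDist G ↑x ↑y ≤ qhDist G' ↑(f x) ↑(f y) ∧
    qhDist G' ↑(f x) ↑(f y) ≤ M * qhDist G ↑x ↑y

/-- `f : G ≃ₜ G'` is `C`-coarsely `M`-quasihyperbolic. -/
def CQH (M C : ℝ) {G : Set X} {G' : Set Y} (f : ↥G ≃ₜ ↥G') : Prop :=
  ∀ x y : ↥G, (qhDist G ↑x ↑y - C) / M ≤ qhDist G' ↑(f x) ↑(f y) ∧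
    qhDist G' ↑(f x) ↑(f y) ≤ M * qhDist G ↑x ↑y + C

/-- `f : G ≃ₜ G'` is freely `φ`-quasiconformal: in every subdomain, the
quasihyperbolic distances of `f` and `f⁻¹` are controlled by `φ`. -/
def FQC (φ : ℝ → ℝ) {G : Set X} {G' : Set Y} (f : ↥G ≃ₜ ↥G') : Prop :=
  ∀ D : Set X, ∀ hD : D ⊆ G, IsDomainSet D →
    ∀ x : X, ∀ hx : x ∈ D, ∀ y : X, ∀ hy : y ∈ D,
      qhDist (imSet f D) ↑(f ⟨x, hD hx⟩) ↑(f ⟨y, hD hy⟩) ≤ φ (qhDist D x y) ∧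
      qhDist D x y ≤ φ (qhDist (imSet f D) ↑(f ⟨x, hD hx⟩) ↑(f ⟨y, hD hy⟩))

end QHDefs

section Helpers

open Real MeasureTheory intervalIntegral

variable {X : Type*} [MetricSpace X]

lemma qhLength_nonneg {G : Set X} {γ : ℝ → X} {L : ℝ} (hL : 0 ≤ L) :
    0 ≤ qhLength G γ L := by
  refine intervalIntegral.integral_nonneg hL fun u _ => ?_
  exact one_div_nonneg.2 Metric.infDist_nonneg

lemma qhSet_bddBelow (G : Set X) (a b : X) :
    BddBelow {l | ∃ σ M, CurveIn G σ M a b ∧ qhLength G σ M = l} := by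
  refine ⟨0, fun l hl => ?_⟩
  obtain ⟨σ, M, hσ, hq⟩ := hl
  exact hq ▸ qhLength_nonneg hσ.nonneg

lemma qhDist_nonneg (G : Set X) (a b : X) : 0 ≤ qhDist G a b := by
  refine Real.sInf_nonneg fun l hl => ?_
  obtain ⟨σ, M, hσ, hq⟩ := hl
  exact hq ▸ qhLength_nonneg hσ.nonneg

lemma curveIn_reverse {G : Set X} {γ : ℝ → X} {L : ℝ} {a b : X}
    (hγ : CurveIn G γ L a b) : CurveIn G (fun u => γ (L - u)) L b a where
  nonneg := hγ.nonneg
  lip := by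
    intro u hu v hv
    have h1 : L - u ∈ Set.Icc 0 L := ⟨by linarith [hu.1, hu.2], by linarith [hu.1]⟩
    have h2 : L - v ∈ Set.Icc 0 L := ⟨by linarith [hv.1, hv.2], by linarith [hv.1]⟩
    have := hγ.lip.dist_le_mul _ h1 _ h2
    rw [dist_sub_left] at this
    rw [edist_dist, edist_dist]
    calc ENNReal.ofReal (dist (γ (L - u)) (γ (L - v)))
        ≤ ENNReal.ofReal (↑(1:NNReal) * dist u v) := ENNReal.ofReal_le_ofReal this
      _ = ↑(1:NNReal) * ENNReal.ofReal (dist u v) := by simp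
  source := by simp [hγ.target]
  target := by simp [hγ.source]
  mem := fun t ht => hγ.mem (L - t) ⟨by linarith [ht.1, ht.2], by linarith [ht.1]⟩

lemma qhLength_reverse (G : Set X) (γ : ℝ → X) (L : ℝ) :
    qhLength G (fun u => γ (L - u)) L = qhLength G γ L := by
  unfold qhLength qhLengthOn
  have := intervalIntegral.integral_comp_sub_left
    (a := (0:ℝ)) (b := L) (fun v => 1 / bdist G (γ v)) L
  simpa using this

lemma qhDist_symm (G : Set X) (a b : X) : qhDist G a b = qhDist G b a := by
  unfold qhDist
  congr 1
  ext l
  constructor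
  · rintro ⟨σ, M, hσ, hq⟩
    exact ⟨fun u => σ (M - u), M, curveIn_reverse hσ, by rw [qhLength_reverse]; exact hq⟩
  · rintro ⟨σ, M, hσ, hq⟩
    exact ⟨fun u => σ (M - u), M, curveIn_reverse hσ, by rw [qhLength_reverse]; exact hq⟩

lemma bdist_pos {G : Set X} (hGo : IsOpen G) (hF : (frontier G).Nonempty)
    {z : X} (hz : z ∈ G) : 0 < bdist G z := by
  have hcl : IsClosed (frontier G) := isClosed_frontier
  have hnm : z ∉ frontier G := fun hzf => (hGo.frontier_eq ▸ hzf).2 hz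
  exact (hcl.notMem_iff_infDist_pos hF).1 hnm

lemma oneDiv_bdist_continuousOn {G : Set X} (hGo : IsOpen G) (hF : (frontier G).Nonempty)
    {γ : ℝ → X} {L : ℝ} {a b : X} (hγ : CurveIn G γ L a b) :
    ContinuousOn (fun u => 1 / bdist G (γ u)) (Set.Icc 0 L) := by
  have hγc : ContinuousOn γ (Set.Icc 0 L) := hγ.lip.continuousOn
  have hb : ContinuousOn (fun u => bdist G (γ u)) (Set.Icc 0 L) :=
    (Metric.continuous_infDist_pt (frontier G)).comp_continuousOn hγc
  exact continuousOn_const.div hb fun u hu => (bdist_pos hGo hF (hγ.mem u hu)).ne'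

lemma oneDiv_bdist_intervalIntegrable {G : Set X} (hGo : IsOpen G)
    (hF : (frontier G).Nonempty) {γ : ℝ → X} {L : ℝ} {x y : X} (hγ : CurveIn G γ L x y)
    {a b : ℝ} (ha : 0 ≤ a) (hab : a ≤ b) (hb : b ≤ L) :
    IntervalIntegrable (fun u => 1 / bdist G (γ u)) volume a b := by
  apply ContinuousOn.intervalIntegrable
  apply (oneDiv_bdist_continuousOn hGo hF hγ).mono
  rw [Set.uIcc_of_le hab]
  exact Set.Icc_subset_Icc ha hb

lemma curveIn_subcurve {G : Set X} {γ : ℝ → X} {L : ℝ} {x y : X}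
    (hγ : CurveIn G γ L x y) {a b : ℝ} (ha : 0 ≤ a) (hab : a ≤ b) (hb : b ≤ L) :
    CurveIn G (fun u => γ (u + a)) (b - a) (γ a) (γ b) where
  nonneg := by linarith
  lip := by
    intro u hu v hv
    have h1 : u + a ∈ Set.Icc 0 L := ⟨by linarith [hu.1], by linarith [hu.2]⟩
    have h2 : v + a ∈ Set.Icc 0 L := ⟨by linarith [hv.1], by linarith [hv.2]⟩
    have := hγ.lip.dist_le_mul _ h1 _ h2
    rw [dist_add_right] at this
    rw [edist_dist, edist_dist]
    calc ENNReal.ofReal (dist (γ (u + a)) (γ (v + a)))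
        ≤ ENNReal.ofReal (↑(1:NNReal) * dist u v) := ENNReal.ofReal_le_ofReal this
      _ = ↑(1:NNReal) * ENNReal.ofReal (dist u v) := by simp
  source := by simp
  target := by simp
  mem := fun t ht => hγ.mem (t + a) ⟨by linarith [ht.1], by linarith [ht.2]⟩

lemma qhDist_le_integral {G : Set X} {γ : ℝ → X} {L : ℝ} {x y : X}
    (hγ : CurveIn G γ L x y) {a b : ℝ} (ha : 0 ≤ a) (hab : a ≤ b) (hb : b ≤ L) :
    qhDist G (γ a) (γ b) ≤ ∫ u in a..b, 1 / bdist G (γ u) := by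
  have hmem : (∫ u in a..b, 1 / bdist G (γ u)) ∈
      {l | ∃ σ M, CurveIn G σ M (γ a) (γ b) ∧ qhLength G σ M = l} := by
    refine ⟨fun u => γ (u + a), b - a, curveIn_subcurve hγ ha hab hb, ?_⟩
    unfold qhLength qhLengthOn
    have := intervalIntegral.integral_comp_add_right
      (a := (0:ℝ)) (b := b - a) (fun v => 1 / bdist G (γ v)) a
    simpa using this
  exact csInf_le (qhSet_bddBelow G (γ a) (γ b)) hmem

lemma qhSet_nonempty {G : Set X} {γ : ℝ → X} {L : ℝ} {x y : X}
    (hγ : CurveIn G γ L x y) {a b : ℝ} (ha : 0 ≤ a) (hab : a ≤ b) (hb : b ≤ L) :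
    {l | ∃ σ M, CurveIn G σ M (γ a) (γ b) ∧ qhLength G σ M = l}.Nonempty :=
  ⟨_, fun u => γ (u + a), b - a, curveIn_subcurve hγ ha hab hb, rfl⟩

/-- Lower bound: `log (1 + dist a b / δ(a)) ≤ qhLength` for any curve from `a` to `b`. -/
lemma log_le_qhLength {G : Set X} (hGo : IsOpen G) (hF : (frontier G).Nonempty)
    {σ : ℝ → X} {M : ℝ} {a b : X} (hσ : CurveIn G σ M a b) :
    Real.log (1 + dist a b / bdist G a) ≤ qhLength G σ M := by
  have haG : a ∈ G := hσ.source ▸ hσ.mem 0 ⟨le_refl 0, hσ.nonneg⟩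
  have hδa : 0 < bdist G a := bdist_pos hGo hF haG
  have hM : 0 ≤ M := hσ.nonneg
  have hdistM : dist a b ≤ M := by
    have := hσ.lip.dist_le_mul 0 ⟨le_refl 0, hM⟩ M ⟨hM, le_refl M⟩
    rw [hσ.source, hσ.target] at this
    calc dist a b ≤ ↑(1:NNReal) * dist (0:ℝ) M := this
      _ = M := by simp [Real.dist_eq, abs_of_nonneg hM]
  -- pointwise bound: bdist (σ u) ≤ bdist a + u
  have hpt : ∀ u ∈ Set.Icc (0:ℝ) M, 1 / (bdist G a + u) ≤ 1 / bdist G (σ u) := by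
    intro u hu
    have hub : bdist G (σ u) ≤ bdist G a + u := by
      have h1 : bdist G (σ u) ≤ bdist G (σ 0) + dist (σ u) (σ 0) :=
        Metric.infDist_le_infDist_add_dist
      have h2 : dist (σ u) (σ 0) ≤ u := by
        have := hσ.lip.dist_le_mul u hu 0 ⟨le_refl 0, hM⟩
        calc dist (σ u) (σ 0) ≤ ↑(1:NNReal) * dist u (0:ℝ) := this
          _ = u := by simp [Real.dist_eq, abs_of_nonneg hu.1]
      rw [hσ.source] at h1 h2
      linarith
    have hpos : 0 < bdist G (σ u) := bdist_pos hGo hF (hσ.mem u hu)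
    exact one_div_le_one_div_of_le hpos hub
  have hint1 : IntervalIntegrable (fun u => 1 / (bdist G a + u)) volume 0 M := by
    apply ContinuousOn.intervalIntegrable
    refine continuousOn_const.div (by fun_prop) fun u hu => ?_
    rw [Set.uIcc_of_le hM] at hu
    have := hu.1; positivity
  have hint2 : IntervalIntegrable (fun u => 1 / bdist G (σ u)) volume 0 M :=
    oneDiv_bdist_intervalIntegrable hGo hF hσ (le_refl 0) hM (le_refl M)
  have hmono : (∫ u in (0:ℝ)..M, 1 / (bdist G a + u)) ≤ qhLength G σ M :=
    intervalIntegral.integral_mono_on hM hint1 hint2 hpt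
  have hcomp : (∫ u in (0:ℝ)..M, 1 / (bdist G a + u)) =
      Real.log ((bdist G a + M) / bdist G a) := by
    have h1 : (∫ u in (0:ℝ)..M, 1 / (u + bdist G a)) =
        ∫ u in (0 + bdist G a)..(M + bdist G a), 1 / u :=
      intervalIntegral.integral_comp_add_right (fun v => 1 / v) (bdist G a)
    have h2 : (0:ℝ) ∉ Set.uIcc (0 + bdist G a) (M + bdist G a) := by
      rw [Set.uIcc_of_le (by linarith)]
      intro hmem
      have := hmem.1
      linarith
    calc (∫ u in (0:ℝ)..M, 1 / (bdist G a + u))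
        = ∫ u in (0:ℝ)..M, 1 / (u + bdist G a) := by
          congr 1; ext u; rw [add_comm]
      _ = ∫ u in (0 + bdist G a)..(M + bdist G a), 1 / u := h1
      _ = Real.log ((M + bdist G a) / (0 + bdist G a)) := integral_one_div h2
      _ = Real.log ((bdist G a + M) / bdist G a) := by rw [zero_add, add_comm M]
  refine le_trans ?_ hmono
  rw [hcomp]
  apply Real.log_le_log (by positivity)
  have heq : 1 + dist a b / bdist G a = (bdist G a + dist a b) / bdist G a := by
    field_simp
  rw [heq]
  exact div_le_div₀ (by linarith) (by linarith) hδa (le_refl _)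

lemma log_le_qhDist {G : Set X} (hGo : IsOpen G) (hF : (frontier G).Nonempty)
    {a b : X} (hne : {l | ∃ σ M, CurveIn G σ M a b ∧ qhLength G σ M = l}.Nonempty) :
    Real.log (1 + dist a b / bdist G a) ≤ qhDist G a b := by
  refine le_csInf hne fun l hl => ?_
  obtain ⟨σ, M, hσ, hq⟩ := hl
  exact hq ▸ log_le_qhLength hGo hF hσ

/-- Convexity bound: for `0 ≤ s ≤ s₀`, `e^s - 1 ≤ (s/s₀)(e^{s₀} - 1)`. -/
lemma exp_sub_one_le {s s₀ : ℝ} (hs : 0 ≤ s) (hs0 : 0 < s₀) (hss : s ≤ s₀) :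
    Real.exp s - 1 ≤ (s / s₀) * (Real.exp s₀ - 1) := by
  have hb : 0 ≤ s / s₀ := by positivity
  have hb1 : s / s₀ ≤ 1 := by rw [div_le_one hs0]; exact hss
  have := convexOn_exp.2 (Set.mem_univ (0:ℝ)) (Set.mem_univ s₀)
    (by linarith : (0:ℝ) ≤ 1 - s / s₀) hb (by ring)
  simp only [smul_eq_mul, mul_zero, zero_add, Real.exp_zero, mul_one] at this
  have heq : (s / s₀) * s₀ = s := div_mul_cancel₀ s hs0.ne'
  rw [heq] at this
  linarith

end Helpers


/-- Lemma 1: If `γ` is a `(ν,h)`-solid arc in `G` with endpoints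
`x, y` and `min{δ_G(x), δ_G(y)} = r ≥ 3c|x−y|`, then
`diam(γ) ≤ max{μ₁|x−y|, 2r(e^h − 1)}` with `μ₁ = 6c(e^{2ν} − 1)`. -/
theorem stmt3 {X : Type*} [MetricSpace X] (c : ℝ) (hc : 1 ≤ c) (hX : QCSpace c X)
    (G : Set X) (hG : IsProperDomain G) (ν h : ℝ) (hν : 1 ≤ ν) (hh : 0 ≤ h)
    (x y : X) (γ : ℝ → X) (L : ℝ) (hγ : CurveIn G γ L x y)
    (hsolid : SolidArc G γ L ν h) (r : ℝ)
    (hr : r = min (bdist G x) (bdist G y)) (hr3c : 3 * c * dist x y ≤ r) :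
    Metric.diam (γ '' Set.Icc 0 L) ≤
      max (6 * c * (Real.exp (2 * ν) - 1) * dist x y) (2 * r * (Real.exp h - 1)) := by
  obtain ⟨hGo, hGconn, hGne⟩ := hG
  set d := dist x y with hd_def
  have hd0 : 0 ≤ d := dist_nonneg
  have hL0 : 0 ≤ L := hγ.nonneg
  have hx0 : γ 0 = x := hγ.source
  have hyL : γ L = y := hγ.target
  have hxG : x ∈ G := hx0 ▸ hγ.mem 0 ⟨le_refl 0, hL0⟩
  have hyG : y ∈ G := hyL ▸ hγ.mem L ⟨hL0, le_refl L⟩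
  have hpre : PreconnectedSpace X := by
    constructor
    apply isPreconnected_of_forall (x := x)
    intro b _
    obtain ⟨σ, M, hσ, _⟩ := hX x b
    refine ⟨σ '' Set.Icc 0 M, Set.subset_univ _, ?_, ?_, ?_⟩
    · exact ⟨0, ⟨le_refl 0, hσ.nonneg⟩, hσ.source⟩
    · exact ⟨M, ⟨hσ.nonneg, le_refl M⟩, hσ.target⟩
    · exact isPreconnected_Icc.image σ hσ.lip.continuousOn
  have hFne : (frontier G).Nonempty := nonempty_frontier_iff.2 ⟨⟨x, hxG⟩, hGne⟩
  have hδx : 0 < bdist G x := bdist_pos hGo hFne hxG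
  have hδy : 0 < bdist G y := bdist_pos hGo hFne hyG
  have hr0 : 0 < r := by rw [hr]; exact lt_min hδx hδy
  have hc0 : 0 < c := lt_of_lt_of_le one_pos hc
  have hrx : r ≤ bdist G x := by rw [hr]; exact min_le_left _ _
  have hry : r ≤ bdist G y := by rw [hr]; exact min_le_right _ _
  have hcd3 : c * d ≤ r / 3 := by linarith
  -- a quasiconvex curve from x to y staying in G
  obtain ⟨σ, M, hσu, hM⟩ := hX x y
  have hσdist : ∀ u ∈ Set.Icc (0:ℝ) M, dist (σ u) x ≤ c * d := by
    intro u hu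
    have hl := hσu.lip.dist_le_mul u hu 0 ⟨le_refl 0, hσu.nonneg⟩
    rw [hσu.source] at hl
    calc dist (σ u) x ≤ ↑(1:NNReal) * dist u (0:ℝ) := hl
      _ = u := by simp [Real.dist_eq, abs_of_nonneg hu.1]
      _ ≤ M := hu.2
      _ ≤ c * d := hM
  have hσG : ∀ u ∈ Set.Icc (0:ℝ) M, σ u ∈ G := by
    intro u hu
    by_contra hnot
    have hKpre : IsPreconnected (σ '' Set.Icc 0 M) :=
      isPreconnected_Icc.image σ hσu.lip.continuousOn
    have hKF : ∀ p ∈ σ '' Set.Icc 0 M, p ∉ frontier G := by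
      rintro p ⟨v, hv, rfl⟩ hpF
      have h1 : Metric.infDist x (frontier G) ≤ dist x (σ v) :=
        Metric.infDist_le_dist_of_mem hpF
      have h2 : dist x (σ v) ≤ c * d := by rw [dist_comm]; exact hσdist v hv
      have h3 : bdist G x ≤ c * d := le_trans h1 h2
      linarith
    have hcover : σ '' Set.Icc 0 M ⊆ G ∪ (closure G)ᶜ := by
      intro p hp
      by_cases hpc : p ∈ closure G
      · left
        by_contra hpG
        exact hKF p hp (hGo.frontier_eq ▸ ⟨hpc, hpG⟩)
      · right; exact hpc
    have hxK : x ∈ σ '' Set.Icc 0 M := ⟨0, ⟨le_refl 0, hσu.nonneg⟩, hσu.source⟩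
    have huK : σ u ∈ σ '' Set.Icc 0 M := ⟨u, hu, rfl⟩
    have huc : σ u ∈ (closure G)ᶜ := fun hcl =>
      hKF _ huK (hGo.frontier_eq ▸ ⟨hcl, hnot⟩)
    obtain ⟨p, _, hpG, hpc⟩ := hKpre G (closure G)ᶜ hGo isClosed_closure.isOpen_compl
      hcover ⟨x, hxK, hxG⟩ ⟨σ u, huK, huc⟩
    exact hpc (subset_closure hpG)
  have hσG' : CurveIn G σ M x y := ⟨hσu.nonneg, hσu.lip, hσu.source, hσu.target, hσG⟩
  -- upper bound on qhDist x y
  have hKxy : qhDist G x y ≤ 3 * c * d / (2 * r) := by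
    have hbd : ∀ u ∈ Set.Icc (0:ℝ) M, 1 / bdist G (σ u) ≤ 3 / (2 * r) := by
      intro u hu
      have h1 : bdist G x ≤ bdist G (σ u) + dist x (σ u) := Metric.infDist_le_infDist_add_dist
      have h2 : dist x (σ u) ≤ c * d := by rw [dist_comm]; exact hσdist u hu
      have h3 : 2 * r / 3 ≤ bdist G (σ u) := by linarith
      have h4 : (0:ℝ) < 2 * r / 3 := by linarith
      calc 1 / bdist G (σ u) ≤ 1 / (2 * r / 3) := one_div_le_one_div_of_le h4 h3
        _ = 3 / (2 * r) := one_div_div (2 * r) 3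
    have hi1 : IntervalIntegrable (fun u => 1 / bdist G (σ u)) MeasureTheory.volume 0 M :=
      oneDiv_bdist_intervalIntegrable hGo hFne hσG' (le_refl 0) hσu.nonneg (le_refl M)
    have hmono := intervalIntegral.integral_mono_on hσu.nonneg hi1
      intervalIntegrable_const hbd
    have hint : qhLength G σ M ≤ 3 * c * d / (2 * r) := by
      calc qhLength G σ M ≤ ∫ _ in (0:ℝ)..M, 3 / (2 * r) := hmono
        _ = M * (3 / (2 * r)) := by
            rw [intervalIntegral.integral_const, smul_eq_mul, sub_zero]
        _ ≤ (c * d) * (3 / (2 * r)) := mul_le_mul_of_nonneg_right hM (by positivity)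
        _ = 3 * c * d / (2 * r) := by ring
    exact le_trans (csInf_le (qhSet_bddBelow G x y) ⟨σ, M, hσG', rfl⟩) hint
  have hKnn : 0 ≤ qhDist G x y := qhDist_nonneg G x y
  have hKhalf : qhDist G x y ≤ 1 / 2 := by
    refine le_trans hKxy ?_
    rw [div_le_div_iff₀ (by linarith) (by norm_num)]
    linarith
  -- coarse sums are bounded by total qh-length
  set Q := qhLength G γ L with hQdef
  have hSle : ∀ S ∈ {S | ∃ n : ℕ, 0 < n ∧ ∃ u : ℕ → ℝ,
      (∀ i < n, u i ≤ u (i + 1)) ∧ (∀ i ≤ n, u i ∈ Set.Icc (0:ℝ) L) ∧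
      (∀ i < n, h ≤ qhDist G (γ (u i)) (γ (u (i + 1)))) ∧
      S = ∑ i ∈ Finset.range n, qhDist G (γ (u i)) (γ (u (i + 1)))}, S ≤ Q := by
    rintro S ⟨n, hn, u, humono, humem, _, rfl⟩
    have hint : ∀ i < n, IntervalIntegrable (fun v => 1 / bdist G (γ v))
        MeasureTheory.volume (u i) (u (i+1)) := fun i hi =>
      oneDiv_bdist_intervalIntegrable hGo hFne hγ (humem i (le_of_lt hi)).1 (humono i hi)
        (humem (i+1) (Nat.succ_le_of_lt hi)).2
    have hsum := intervalIntegral.sum_integral_adjacent_intervals hint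
    have hchain : u 0 ≤ u n := by
      have haux : ∀ i, i ≤ n → u 0 ≤ u i := by
        intro i hi
        induction i with
        | zero => exact le_refl _
        | succ k ih =>
            exact le_trans (ih (le_of_lt (Nat.lt_of_succ_le hi)))
              (humono k (Nat.lt_of_succ_le hi))
      exact haux n (le_refl n)
    have hstep : ∀ i ∈ Finset.range n,
        qhDist G (γ (u i)) (γ (u (i+1))) ≤ ∫ v in (u i)..(u (i+1)), 1 / bdist G (γ v) := by
      intro i hi
      rw [Finset.mem_range] at hi
      exact qhDist_le_integral hγ (humem i (le_of_lt hi)).1 (humono i hi)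
        (humem (i+1) (Nat.succ_le_of_lt hi)).2
    calc ∑ i ∈ Finset.range n, qhDist G (γ (u i)) (γ (u (i + 1)))
        ≤ ∑ i ∈ Finset.range n, ∫ v in (u i)..(u (i+1)), 1 / bdist G (γ v) :=
          Finset.sum_le_sum hstep
      _ = ∫ v in (u 0)..(u n), 1 / bdist G (γ v) := hsum
      _ ≤ Q := by
          refine intervalIntegral.integral_mono_interval
            (humem 0 (Nat.zero_le n)).1 hchain (humem n (le_refl n)).2
            (Filter.Eventually.of_forall fun v => ?_)
            (oneDiv_bdist_intervalIntegrable hGo hFne hγ (le_refl 0) hL0 (le_refl L))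
          exact one_div_nonneg.2 Metric.infDist_nonneg
  have hbdd : BddAbove {S | ∃ n : ℕ, 0 < n ∧ ∃ u : ℕ → ℝ,
      (∀ i < n, u i ≤ u (i + 1)) ∧ (∀ i ≤ n, u i ∈ Set.Icc (0:ℝ) L) ∧
      (∀ i < n, h ≤ qhDist G (γ (u i)) (γ (u (i + 1)))) ∧
      S = ∑ i ∈ Finset.range n, qhDist G (γ (u i)) (γ (u (i + 1)))} := ⟨Q, hSle⟩
  -- key numeric bound
  set B := max (3 * c * (Real.exp (2 * ν) - 1) * d) (r * (Real.exp h - 1)) with hB_def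
  have hν0 : (0:ℝ) < ν := by linarith
  have hexp0 : (0:ℝ) ≤ Real.exp (2*ν) - 1 := by
    have := Real.one_le_exp (by linarith : (0:ℝ) ≤ 2*ν); linarith
  have key : ∀ (w z : X) (k : ℝ), 0 ≤ k → bdist G w ≤ r → 0 < bdist G w →
      Real.log (1 + dist w z / bdist G w) ≤ k →
      (k < h ∨ k ≤ ν * qhDist G x y) → dist w z ≤ B := by
    intro w z k hk0 hwr hw0 hlog hcase
    have hek1 : (1:ℝ) ≤ Real.exp k := Real.one_le_exp hk0
    have hbase : dist w z ≤ bdist G w * (Real.exp k - 1) := by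
      have h1 : 1 + dist w z / bdist G w ≤ Real.exp k := by
        have h2 := Real.exp_le_exp.2 hlog
        rwa [Real.exp_log (by positivity)] at h2
      have h3 : dist w z / bdist G w ≤ Real.exp k - 1 := by linarith
      calc dist w z = (dist w z / bdist G w) * bdist G w := by field_simp
        _ ≤ (Real.exp k - 1) * bdist G w := mul_le_mul_of_nonneg_right h3 (le_of_lt hw0)
        _ = bdist G w * (Real.exp k - 1) := mul_comm _ _
    have hbase' : dist w z ≤ r * (Real.exp k - 1) :=
      le_trans hbase (mul_le_mul_of_nonneg_right hwr (by linarith))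
    rcases hcase with hlt | hle
    · refine le_trans ?_ (le_max_right _ _)
      refine le_trans hbase' (mul_le_mul_of_nonneg_left ?_ (le_of_lt hr0))
      have := Real.exp_le_exp.2 (le_of_lt hlt); linarith
    · refine le_trans ?_ (le_max_left _ _)
      have hk2ν : k ≤ 2 * ν := by nlinarith
      have hconv : Real.exp k - 1 ≤ (k / (2*ν)) * (Real.exp (2*ν) - 1) :=
        exp_sub_one_le hk0 (by linarith) hk2ν
      have hkK : k / (2*ν) ≤ qhDist G x y / 2 := by
        rw [div_le_div_iff₀ (by linarith) (by norm_num)]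
        nlinarith
      calc dist w z ≤ r * (Real.exp k - 1) := hbase'
        _ ≤ r * ((qhDist G x y / 2) * (Real.exp (2*ν) - 1)) := by
            refine mul_le_mul_of_nonneg_left ?_ (le_of_lt hr0)
            exact le_trans hconv (mul_le_mul_of_nonneg_right hkK hexp0)
        _ ≤ r * ((3 * c * d / (2 * r) / 2) * (Real.exp (2*ν) - 1)) := by
            refine mul_le_mul_of_nonneg_left
              (mul_le_mul_of_nonneg_right (by linarith) hexp0) (le_of_lt hr0)
        _ = (3 * c / 4) * (Real.exp (2*ν) - 1) * d := by field_simp; ring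
        _ ≤ 3 * c * (Real.exp (2*ν) - 1) * d := by
            nlinarith [mul_nonneg (mul_nonneg hc0.le hexp0) hd0]
  -- a common endpoint w with bdist G w = r, close to all points of γ
  have hexists : ∃ w : X, bdist G w ≤ r ∧ 0 < bdist G w ∧
      ∀ t ∈ Set.Icc (0:ℝ) L, dist w (γ t) ≤ B := by
    rcases le_total (bdist G x) (bdist G y) with hxy | hyx
    · refine ⟨x, by rw [hr, min_eq_left hxy], hδx, fun t ht => ?_⟩
      set k := qhDist G x (γ t) with hk_def
      have hk0 : 0 ≤ k := qhDist_nonneg G x (γ t)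
      have hne : {l | ∃ σ' M', CurveIn G σ' M' x (γ t) ∧ qhLength G σ' M' = l}.Nonempty := by
        have := qhSet_nonempty hγ (le_refl 0) ht.1 ht.2
        rwa [hx0] at this
      have hlog : Real.log (1 + dist x (γ t) / bdist G x) ≤ k :=
        log_le_qhDist hGo hFne hne
      rcases lt_or_ge k h with hlt | hge
      · exact key x (γ t) k hk0 (by rw [hr, min_eq_left hxy]) hδx hlog (Or.inl hlt)
      · refine key x (γ t) k hk0 (by rw [hr, min_eq_left hxy]) hδx hlog (Or.inr ?_)
        have hmem : k ∈ {S | ∃ n : ℕ, 0 < n ∧ ∃ u : ℕ → ℝ,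
            (∀ i < n, u i ≤ u (i + 1)) ∧ (∀ i ≤ n, u i ∈ Set.Icc (0:ℝ) L) ∧
            (∀ i < n, h ≤ qhDist G (γ (u i)) (γ (u (i + 1)))) ∧
            S = ∑ i ∈ Finset.range n, qhDist G (γ (u i)) (γ (u (i + 1)))} := by
          refine ⟨1, one_pos, fun i => if i = 0 then 0 else t, ?_, ?_, ?_, ?_⟩
          · intro i hi
            interval_cases i
            simp [ht.1]
          · intro i hi
            by_cases h0 : i = 0
            · simp [h0, hL0]
            · simp [h0, ht]
          · intro i hi
            interval_cases i
            simpa [hx0, hk_def] using hge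
          · simp [Finset.sum_range_one, hx0, hk_def]
        have hkle : k ≤ coarseQHLength G γ 0 L h := by
          unfold coarseQHLength
          exact le_csSup hbdd hmem
        have hsol := hsolid 0 L (le_refl 0) hL0 (le_refl L)
        rw [hx0, hyL] at hsol
        exact le_trans hkle hsol
    · refine ⟨y, by rw [hr, min_eq_right hyx], hδy, fun t ht => ?_⟩
      set k := qhDist G y (γ t) with hk_def
      have hk0 : 0 ≤ k := qhDist_nonneg G y (γ t)
      have hne : {l | ∃ σ' M', CurveIn G σ' M' y (γ t) ∧ qhLength G σ' M' = l}.Nonempty := by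
        have h1 := curveIn_subcurve hγ ht.1 ht.2 (le_refl L)
        have h2 := curveIn_reverse h1
        rw [hyL] at h2
        exact ⟨_, _, _, h2, rfl⟩
      have hlog : Real.log (1 + dist y (γ t) / bdist G y) ≤ k :=
        log_le_qhDist hGo hFne hne
      have hksymm : k = qhDist G (γ t) (γ L) := by rw [hk_def, hyL, qhDist_symm]
      rcases lt_or_ge k h with hlt | hge
      · exact key y (γ t) k hk0 (by rw [hr, min_eq_right hyx]) hδy hlog (Or.inl hlt)
      · refine key y (γ t) k hk0 (by rw [hr, min_eq_right hyx]) hδy hlog (Or.inr ?_)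
        have hmem : k ∈ {S | ∃ n : ℕ, 0 < n ∧ ∃ u : ℕ → ℝ,
            (∀ i < n, u i ≤ u (i + 1)) ∧ (∀ i ≤ n, u i ∈ Set.Icc (0:ℝ) L) ∧
            (∀ i < n, h ≤ qhDist G (γ (u i)) (γ (u (i + 1)))) ∧
            S = ∑ i ∈ Finset.range n, qhDist G (γ (u i)) (γ (u (i + 1)))} := by
          refine ⟨1, one_pos, fun i => if i = 0 then t else L, ?_, ?_, ?_, ?_⟩
          · intro i hi
            interval_cases i
            simp [ht.2]
          · intro i hi
            by_cases h0 : i = 0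
            · simp [h0, ht]
            · simp [h0, hL0]
          · intro i hi
            interval_cases i
            simpa [← hksymm] using hge
          · simp only [Finset.sum_range_one]
            simpa using hksymm
        have hkle : k ≤ coarseQHLength G γ 0 L h := by
          unfold coarseQHLength
          exact le_csSup hbdd hmem
        have hsol := hsolid 0 L (le_refl 0) hL0 (le_refl L)
        rw [hx0, hyL] at hsol
        exact le_trans hkle hsol
  obtain ⟨w, hwr, hw0, hwall⟩ := hexists
  have hEh : (0:ℝ) ≤ Real.exp h - 1 := by
    have := Real.one_le_exp hh; linarith
  have hB0 : 0 ≤ B :=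
    le_trans (mul_nonneg hr0.le hEh) (le_max_right (3 * c * (Real.exp (2 * ν) - 1) * d) _)
  have h2B : B + B ≤ max (6 * c * (Real.exp (2 * ν) - 1) * d) (2 * r * (Real.exp h - 1)) := by
    rcases le_total (3 * c * (Real.exp (2 * ν) - 1) * d) (r * (Real.exp h - 1)) with hbb | hbb
    · rw [hB_def, max_eq_right hbb]
      refine le_trans (by linarith) (le_max_right (6 * c * (Real.exp (2 * ν) - 1) * d) _)
    · rw [hB_def, max_eq_left hbb]
      refine le_trans (by linarith) (le_max_left _ (2 * r * (Real.exp h - 1)))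
  refine Metric.diam_le_of_forall_dist_le (le_trans (by linarith) h2B) ?_
  rintro z ⟨t, ht, rfl⟩ z' ⟨t', ht', rfl⟩
  calc dist (γ t) (γ t') ≤ dist (γ t) w + dist w (γ t') := dist_triangle _ _ _
    _ ≤ B + B := by
        have h1 := hwall t ht
        have h2 := hwall t' ht'
        rw [dist_comm] at h1
        linarith
    _ ≤ _ := h2B
end

section
/- Suppose X is a c-quasiconvex metric space and G ⊊ X a domain. Let x, y ∈ G with |x−y| ≤ min{δ_G(x), δ_G(y)}/(3c), and let γ be an ε-short arc in G connecting x and y with 0 < ε ≤ k_G(x,y)/2. Then ℓ(γ) ≤ (9/2)·c·e^{3/2}·|x−y|. -/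
open Metric Set Filter

section AuxProof

variable {X : Type*} [MetricSpace X]

lemma bdist_pos_of_mem {G : Set X} (hGo : IsOpen G) (hfr : (frontier G).Nonempty)
    {z : X} (hz : z ∈ G) : 0 < bdist G z := by
  refine (isClosed_frontier.notMem_iff_infDist_pos hfr).1 ?_
  intro h
  have := h.2
  rw [hGo.interior_eq] at this
  exact this hz

lemma qhLengthOn_nonneg (G : Set X) (γ : ℝ → X) {s t : ℝ} (h : s ≤ t) :
    0 ≤ qhLengthOn G γ s t :=
  intervalIntegral.integral_nonneg h fun u _ => one_div_nonneg.2 Metric.infDist_nonneg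

lemma qhDist_bddBelow (G : Set X) (x y : X) :
    BddBelow {l | ∃ γ L, CurveIn G γ L x y ∧ qhLength G γ L = l} := by
  refine ⟨0, fun l hl => ?_⟩
  obtain ⟨γ, L, hγ, rfl⟩ := hl
  exact qhLengthOn_nonneg G γ hγ.nonneg

lemma qhDist_le_qhLength {G : Set X} {x y : X} {γ : ℝ → X} {L : ℝ}
    (h : CurveIn G γ L x y) : qhDist G x y ≤ qhLength G γ L :=
  csInf_le (qhDist_bddBelow G x y) ⟨γ, L, h, rfl⟩

lemma qhDist_nonneg' {G : Set X} {x y : X} {γ : ℝ → X} {L : ℝ}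
    (h : CurveIn G γ L x y) : 0 ≤ qhDist G x y := by
  refine le_csInf ⟨_, γ, L, h, rfl⟩ fun l hl => ?_
  obtain ⟨γ', L', h', rfl⟩ := hl
  exact qhLengthOn_nonneg G γ' h'.nonneg

/-- A curve starting in `G` which stays strictly within `bdist G x` of its
starting point `x` remains in `G`. -/
lemma curve_stays_in {G : Set X} (hGo : IsOpen G) {x : X} (hx : x ∈ G)
    {σ : ℝ → X} {M : ℝ} (hM0 : 0 ≤ M) (hlip : LipschitzOnWith 1 σ (Set.Icc 0 M))
    (h0 : σ 0 = x) (hclose : ∀ t ∈ Set.Icc (0:ℝ) M, dist x (σ t) < bdist G x) :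
    ∀ t ∈ Set.Icc (0:ℝ) M, σ t ∈ G := by
  set f : ℝ → ℝ := fun t => max 0 (min t M) with hf
  have hfmem : ∀ t : ℝ, f t ∈ Set.Icc (0:ℝ) M := fun t =>
    ⟨le_max_left _ _, max_le hM0 (min_le_right _ _)⟩
  have hfeq : ∀ t ∈ Set.Icc (0:ℝ) M, f t = t := by
    intro t ht
    simp [hf, min_eq_left ht.2, max_eq_right ht.1]
  have hfc : Continuous f := continuous_const.max (continuous_id.min continuous_const)
  set τ : ℝ → X := σ ∘ f with hτ
  have hτc : Continuous τ := hlip.continuousOn.comp_continuous hfc hfmem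
  set u : Set ℝ := τ ⁻¹' G with hu
  set v : Set ℝ := τ ⁻¹' (closure G)ᶜ with hv
  have huo : IsOpen u := hGo.preimage hτc
  have hvo : IsOpen v := isClosed_closure.isOpen_compl.preimage hτc
  have huv : Disjoint u v := Set.disjoint_left.2 fun t ht ht' => ht' (subset_closure ht)
  have hsub : Set.Icc (0:ℝ) M ⊆ u ∪ v := by
    intro t ht
    have hτt : τ t = σ t := by rw [hτ]; simp only [Function.comp_apply, hfeq t ht]
    by_cases hG : σ t ∈ G
    · left; rw [Set.mem_preimage, hτt]; exact hG
    · right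
      rw [Set.mem_preimage, hτt]
      intro hcl
      have hfrt : σ t ∈ frontier G := by
        constructor
        · exact hcl
        · rw [hGo.interior_eq]; exact hG
      have h5 : Metric.infDist x (frontier G) ≤ dist x (σ t) :=
        Metric.infDist_le_dist_of_mem hfrt
      exact absurd h5 (not_le.2 (hclose t ht))
  have hne : (Set.Icc (0:ℝ) M ∩ u).Nonempty := by
    refine ⟨0, ⟨le_refl 0, hM0⟩, ?_⟩
    rw [Set.mem_preimage]
    have : f 0 = 0 := hfeq 0 ⟨le_refl 0, hM0⟩
    simp only [hτ, Function.comp_apply, this, h0]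
    exact hx
  have := isPreconnected_Icc.subset_left_of_subset_union huo hvo huv hsub hne
  intro t ht
  have := this ht
  rw [Set.mem_preimage] at this
  rwa [hτ, Function.comp_apply, hfeq t ht] at this

end AuxProof

/-- Lemma 2: If `γ` is an `ε`-short arc in `G` connecting `x` and `y`
with `0 < ε ≤ k_G(x,y)/2` and `|x−y| ≤ min{δ_G(x), δ_G(y)}/(3c)`, then
`ℓ(γ) ≤ (9/2)·c·e^{3/2}·|x−y|`. -/
theorem stmt4 {X : Type*} [MetricSpace X] (c : ℝ) (hc : 1 ≤ c) (hX : QCSpace c X)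
    (G : Set X) (hG : IsProperDomain G) (x y : X) (γ : ℝ → X) (L ε : ℝ)
    (hγ : CurveIn G γ L x y) (hshort : ShortArc G γ L ε)
    (hε0 : 0 < ε) (hε : ε ≤ qhDist G x y / 2)
    (hxy : dist x y ≤ min (bdist G x) (bdist G y) / (3 * c)) :
    L ≤ (9 / 2) * c * Real.exp (3 / 2) * dist x y := by
  obtain ⟨hGo, hGconn, hGne⟩ := hG
  have hL0 : 0 ≤ L := hγ.nonneg
  have hxG : x ∈ G := hγ.source ▸ hγ.mem 0 ⟨le_refl 0, hL0⟩
  have hk0 : 0 < qhDist G x y := by linarith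
  rcases Set.eq_empty_or_nonempty (frontier G) with hfr | hfr
  · -- empty frontier: qhDist = 0, contradiction
    exfalso
    have h0 : qhLength G γ L = 0 := by
      simp [qhLength, qhLengthOn, bdist, hfr, Metric.infDist_empty]
    have := qhDist_le_qhLength hγ
    rw [h0] at this
    linarith
  have hc0 : (0:ℝ) < c := by linarith
  set B := bdist G x with hBdef
  have hB : 0 < B := bdist_pos_of_mem hGo hfr hxG
  set d := dist x y with hddef
  have hd0 : 0 ≤ d := dist_nonneg
  have hcd : c * d ≤ B / 3 := by
    have h3c : (0:ℝ) < 3 * c := by linarith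
    have h1 : d ≤ B / (3 * c) := le_trans hxy (by gcongr; exact min_le_left _ _)
    rw [le_div_iff₀ h3c] at h1
    nlinarith
  -- quasiconvex curve from x to y
  obtain ⟨σ, M, hσ, hMle⟩ := hX x y
  have hM0 : 0 ≤ M := hσ.nonneg
  have hMB : M ≤ B / 3 := le_trans hMle hcd
  have hdistσ : ∀ t ∈ Set.Icc (0:ℝ) M, dist x (σ t) ≤ M := by
    intro t ht
    have h0m : (0:ℝ) ∈ Set.Icc (0:ℝ) M := ⟨le_refl 0, hM0⟩
    have := hσ.lip.dist_le_mul 0 h0m t ht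
    rw [hσ.source] at this
    calc dist x (σ t) ≤ 1 * dist (0:ℝ) t := this
      _ = |t| := by rw [one_mul, Real.dist_eq]; simp [abs_sub_comm]
      _ = t := abs_of_nonneg ht.1
      _ ≤ M := ht.2
  have hclose : ∀ t ∈ Set.Icc (0:ℝ) M, dist x (σ t) < B := by
    intro t ht
    calc dist x (σ t) ≤ M := hdistσ t ht
      _ ≤ B / 3 := hMB
      _ < B := by linarith
  have hmemσ : ∀ t ∈ Set.Icc (0:ℝ) M, σ t ∈ G :=
    curve_stays_in hGo hxG hM0 hσ.lip hσ.source hclose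
  have hσG : CurveIn G σ M x y := ⟨hM0, hσ.lip, hσ.source, hσ.target, hmemσ⟩
  -- lower bound on bdist along σ
  have hbσ : ∀ u ∈ Set.Icc (0:ℝ) M, 2 * B / 3 ≤ bdist G (σ u) := by
    intro u hu
    have h1 : B ≤ bdist G (σ u) + dist x (σ u) := Metric.infDist_le_infDist_add_dist
    have h2 : dist x (σ u) ≤ M := hdistσ u hu
    linarith
  have hbσpos : ∀ u ∈ Set.Icc (0:ℝ) M, 0 < bdist G (σ u) := fun u hu => by
    have := hbσ u hu; linarith
  -- integrability of 1/bdist∘σ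
  have hcontσ : ContinuousOn (fun u => 1 / bdist G (σ u)) (Set.Icc 0 M) := by
    refine ContinuousOn.div continuousOn_const ?_ ?_
    · exact (Metric.continuous_infDist_pt (frontier G)).comp_continuousOn hσ.lip.continuousOn
    · intro u hu; exact ne_of_gt (hbσpos u hu)
  have hintσ : IntervalIntegrable (fun u => 1 / bdist G (σ u))
      MeasureTheory.volume 0 M := hcontσ.intervalIntegrable_of_Icc hM0
  -- upper bound for qhLength of σ
  have hup : qhLength G σ M ≤ M * (3 / (2 * B)) := by
    have hbound : ∀ u ∈ Set.Icc (0:ℝ) M, 1 / bdist G (σ u) ≤ 3 / (2 * B) := by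
      intro u hu
      rw [div_le_div_iff₀ (hbσpos u hu) (by linarith)]
      have := hbσ u hu
      nlinarith
    calc qhLength G σ M = ∫ u in (0:ℝ)..M, 1 / bdist G (σ u) := rfl
      _ ≤ ∫ _ in (0:ℝ)..M, 3 / (2 * B) :=
          intervalIntegral.integral_mono_on hM0 hintσ intervalIntegrable_const hbound
      _ = M * (3 / (2 * B)) := by
          rw [intervalIntegral.integral_const]; simp [smul_eq_mul]
  have hk_le : qhDist G x y ≤ c * d * (3 / (2 * B)) := by
    calc qhDist G x y ≤ qhLength G σ M := qhDist_le_qhLength hσG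
      _ ≤ M * (3 / (2 * B)) := hup
      _ ≤ c * d * (3 / (2 * B)) := by
          apply mul_le_mul_of_nonneg_right hMle
          positivity
  -- k ≤ 3cd/(2B) and cd ≤ B/3 give k ≤ 1/2
  set k := qhDist G x y with hkdef
  set ℓ := qhLength G γ L with hldef
  have hℓk : ℓ ≤ k + ε := by
    have h := hshort
    rw [ShortArc, hγ.source, hγ.target] at h
    exact h
  have hℓ1 : ℓ ≤ (3/2) * k := by linarith
  have hBne : B ≠ 0 := ne_of_gt hB
  have hℓ2 : ℓ ≤ 9 * c * d / (4 * B) := by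
    calc ℓ ≤ (3/2) * k := hℓ1
      _ ≤ (3/2) * (c * d * (3 / (2 * B))) := by linarith
      _ = 9 * c * d / (4 * B) := by field_simp; ring
  have hℓ34 : ℓ ≤ 3 / 4 := by
    have h1 : 9 * c * d / (4 * B) ≤ 3 / 4 := by
      rw [div_le_div_iff₀ (by linarith : (0:ℝ) < 4 * B) (by norm_num : (0:ℝ) < 4)]
      nlinarith [hcd]
    linarith
  -- lower bound: L/(B+L) ≤ ℓ
  have hbγpos : ∀ u ∈ Set.Icc (0:ℝ) L, 0 < bdist G (γ u) := fun u hu =>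
    bdist_pos_of_mem hGo hfr (hγ.mem u hu)
  have hbγup : ∀ u ∈ Set.Icc (0:ℝ) L, bdist G (γ u) ≤ B + L := by
    intro u hu
    have h1 : bdist G (γ u) ≤ B + dist (γ u) x := Metric.infDist_le_infDist_add_dist
    have h0m : (0:ℝ) ∈ Set.Icc (0:ℝ) L := ⟨le_refl 0, hL0⟩
    have h2 := hγ.lip.dist_le_mul u hu 0 h0m
    rw [hγ.source] at h2
    have h3 : dist (γ u) x ≤ L := by
      calc dist (γ u) x ≤ 1 * dist u (0:ℝ) := h2
        _ = |u| := by rw [one_mul, Real.dist_eq]; simp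
        _ = u := abs_of_nonneg hu.1
        _ ≤ L := hu.2
    linarith
  have hcontγ : ContinuousOn (fun u => 1 / bdist G (γ u)) (Set.Icc 0 L) := by
    refine ContinuousOn.div continuousOn_const ?_ ?_
    · exact (Metric.continuous_infDist_pt (frontier G)).comp_continuousOn hγ.lip.continuousOn
    · intro u hu; exact ne_of_gt (hbγpos u hu)
  have hintγ : IntervalIntegrable (fun u => 1 / bdist G (γ u))
      MeasureTheory.volume 0 L := hcontγ.intervalIntegrable_of_Icc hL0
  have hBL : (0:ℝ) < B + L := by linarith
  have hlow : L / (B + L) ≤ ℓ := by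
    have hbound : ∀ u ∈ Set.Icc (0:ℝ) L, 1 / (B + L) ≤ 1 / bdist G (γ u) := by
      intro u hu
      rw [div_le_div_iff₀ hBL (hbγpos u hu)]
      have := hbγup u hu
      linarith
    calc L / (B + L) = ∫ _ in (0:ℝ)..L, 1 / (B + L) := by
          rw [intervalIntegral.integral_const]; simp [smul_eq_mul]; ring
      _ ≤ ∫ u in (0:ℝ)..L, 1 / bdist G (γ u) :=
          intervalIntegral.integral_mono_on hL0 intervalIntegrable_const hintγ hbound
      _ = ℓ := rfl
  -- combine
  have hLle : L ≤ ℓ * (B + L) := (div_le_iff₀ hBL).1 hlow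
  have hℓB : ℓ * B ≤ 9 * c * d / 4 := by
    have h1 := mul_le_mul_of_nonneg_right hℓ2 hB.le
    have h2 : 9 * c * d / (4 * B) * B = 9 * c * d / 4 := by field_simp
    rw [h2] at h1
    exact h1
  have hℓL : ℓ * L ≤ (3/4) * L := mul_le_mul_of_nonneg_right hℓ34 hL0
  have hL9 : L ≤ 9 * c * d := by
    have hexp2 : ℓ * (B + L) = ℓ * B + ℓ * L := by ring
    linarith [hLle, hℓB, hℓL, hexp2]
  have hexp : (2:ℝ) ≤ Real.exp (3/2) := by
    nlinarith [Real.add_one_le_exp (3/2 : ℝ)]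
  have hcd0 : 0 ≤ c * d := by positivity
  calc L ≤ 9 * c * d := hL9
    _ ≤ 9 / 2 * c * Real.exp (3/2) * d := by
        have h := mul_le_mul_of_nonneg_left hexp hcd0
        nlinarith [h]
end

section
/- Suppose G ⊊ X is a locally a-John domain in a quasiconvex metric space X. Then for any x, y ∈ G with |x−y| = t·δ_G(x), where 0 < t < 1, the quasihyperbolic distance satisfies k_G(x,y) ≤ 2a(3+t)/(1−t). -/
open Metric Set Filter

section Aux
variable {X : Type*} [MetricSpace X]

/-- A preconnected set disjoint from the frontier of an open set, meeting it, is inside it. -/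
lemma aux_conn_subset {u C : Set X} (hu : IsOpen u) (hC : IsPreconnected C)
    (hdisj : ∀ z ∈ C, z ∉ frontier u) (hmeet : (C ∩ u).Nonempty) : C ⊆ u := by
  refine hC.subset_left_of_subset_union hu (isClosed_closure (s := u)).isOpen_compl ?_ ?_ hmeet
  · exact Set.disjoint_left.2 fun z hz hz' => hz' (subset_closure hz)
  · intro z hz
    rcases (em (z ∈ closure u)) with h | h
    · left
      by_contra hzu
      exact hdisj z hz ⟨h, by rwa [hu.interior_eq]⟩
    · exact Or.inr h

/-- A preconnected set meeting an open set and its complement meets its frontier. -/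
lemma aux_frontier_hit {u C : Set X} (hu : IsOpen u) (hC : IsPreconnected C)
    (hmeet : (C ∩ u).Nonempty) {p : X} (hp : p ∈ C) (hpu : p ∉ u) :
    ∃ q ∈ C, q ∈ frontier u := by
  by_contra h
  push_neg at h
  exact hpu (aux_conn_subset hu hC h hmeet hp)

end Aux


/-- Lemma 4: If `G` is a locally `a`-John proper domain in a
quasiconvex space, then for `x, y ∈ G` with `|x−y| = t·δ_G(x)`, `0 < t < 1`,
`k_G(x,y) ≤ 2a(3+t)/(1−t)`. -/
theorem stmt6 {X : Type*} [MetricSpace X] (c : ℝ) (hc : 1 ≤ c) (hX : QCSpace c X)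
    (G : Set X) (hG : IsProperDomain G) (a : ℝ) (ha : 1 ≤ a)
    (hGJ : LocallyJohn a G) (x y : X) (hx : x ∈ G) (hy : y ∈ G)
    (t : ℝ) (ht0 : 0 < t) (ht1 : t < 1) (hxy : dist x y = t * bdist G x) :
    qhDist G x y ≤ 2 * a * (3 + t) / (1 - t) := by
  classical
  obtain ⟨hGopen, hGconn, hGne⟩ := hG
  -- the frontier of G is nonempty
  have hFne : (frontier G).Nonempty := by
    obtain ⟨p, hp⟩ : ∃ p, p ∉ G := by
      by_contra h; push_neg at h; exact hGne (Set.eq_univ_of_forall h)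
    obtain ⟨σ, L', hσ, _⟩ := hX x p
    have hC : IsPreconnected (σ '' Set.Icc 0 L') :=
      isPreconnected_Icc.image σ hσ.lip.continuousOn
    obtain ⟨q, _, hqF⟩ := aux_frontier_hit hGopen hC
      ⟨x, ⟨0, ⟨le_refl 0, hσ.nonneg⟩, hσ.source⟩, hx⟩
      ⟨L', ⟨hσ.nonneg, le_refl _⟩, hσ.target⟩ hp
    exact ⟨q, hqF⟩
  set r := bdist G x with hr
  have hxF : x ∉ frontier G := fun h => h.2 (by rw [hGopen.interior_eq]; exact hx)
  have hr0 : 0 < r := by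
    rw [hr]
    exact (isClosed_frontier.notMem_iff_infDist_pos hFne).1 hxF
  set s := (1 + t) * r / 2 with hs
  have hs0 : 0 < s := by rw [hs]; positivity
  have hsr : s < r := by rw [hs]; nlinarith
  have hJohn : IsJohn a (Metric.ball x s) := hGJ x hx s hs0 hsr.le
  have hyB : y ∈ Metric.ball x s := by
    rw [Metric.mem_ball, dist_comm, hxy, hs]; nlinarith
  have hxB : x ∈ Metric.ball x s := Metric.mem_ball_self hs0
  obtain ⟨γ, L, hcurve, hjohn⟩ := hJohn x hxB y hyB
  have hL0 : 0 ≤ L := hcurve.nonneg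
  have hγc : ContinuousOn γ (Set.Icc 0 L) := hcurve.lip.continuousOn
  have hmemB : ∀ u ∈ Set.Icc 0 L, dist (γ u) x < s := fun u hu =>
    Metric.mem_ball.1 (hcurve.mem u hu)
  have hrs : 0 < r - s := by linarith
  -- lower bound for bdist G along the curve
  have hlow : ∀ u ∈ Set.Icc 0 L, r - s ≤ bdist G (γ u) := by
    intro u hu
    have key : Metric.infDist x (frontier G) ≤
        Metric.infDist (γ u) (frontier G) + dist x (γ u) :=
      Metric.infDist_le_infDist_add_dist
    have hd : dist x (γ u) < s := by rw [dist_comm]; exact hmemB u hu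
    have h1 : r ≤ bdist G (γ u) + dist x (γ u) := key
    linarith
  -- the curve stays in G
  have hmemG : ∀ u ∈ Set.Icc 0 L, γ u ∈ G := by
    intro u hu
    have hC : IsPreconnected (γ '' Set.Icc 0 L) := isPreconnected_Icc.image γ hγc
    refine aux_conn_subset hGopen hC ?_
      ⟨x, ⟨0, ⟨le_refl 0, hL0⟩, hcurve.source⟩, hx⟩ ⟨u, hu, rfl⟩
    rintro z ⟨v, hv, rfl⟩ hzF
    have h0 : bdist G (γ v) = 0 := Metric.infDist_zero_of_mem hzF
    have := hlow v hv
    linarith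
  -- the frontier of the ball is nonempty
  obtain ⟨w, hw⟩ := hFne
  have hwB : w ∉ Metric.ball x s := by
    intro hwB
    have h1 : r ≤ dist x w := Metric.infDist_le_dist_of_mem hw
    have h2 : dist w x < s := Metric.mem_ball.1 hwB
    rw [dist_comm] at h2
    linarith
  obtain ⟨σ, L', hσ, _⟩ := hX x w
  obtain ⟨q, -, hq⟩ : ∃ q ∈ σ '' Set.Icc 0 L', q ∈ frontier (Metric.ball x s) := by
    have hC : IsPreconnected (σ '' Set.Icc 0 L') :=
      isPreconnected_Icc.image σ hσ.lip.continuousOn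
    exact aux_frontier_hit Metric.isOpen_ball hC
      ⟨x, ⟨0, ⟨le_refl 0, hσ.nonneg⟩, hσ.source⟩, hxB⟩
      ⟨L', ⟨hσ.nonneg, le_refl _⟩, hσ.target⟩ hwB
  have hqd : dist x q ≤ s := by
    have h1 : q ∈ Metric.closedBall x s :=
      Metric.closure_ball_subset_closedBall hq.1
    rw [dist_comm]
    exact Metric.mem_closedBall.1 h1
  -- bound the length of the curve
  have hLb : L ≤ 4 * a * s := by
    have hmid : L / 2 ∈ Set.Icc 0 L := ⟨by linarith, by linarith⟩
    have hj := hjohn (L / 2) hmid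
    have hmin : min (L / 2) (L - L / 2) = L / 2 := by
      rw [min_eq_left]; linarith
    rw [hmin] at hj
    have hble : bdist (Metric.ball x s) (γ (L / 2)) ≤ 2 * s := by
      have h1 : bdist (Metric.ball x s) (γ (L / 2)) ≤ dist (γ (L / 2)) q :=
        Metric.infDist_le_dist_of_mem hq
      have h2 : dist (γ (L / 2)) q ≤ dist (γ (L / 2)) x + dist x q :=
        dist_triangle _ _ _
      have h3 := hmemB (L / 2) hmid
      linarith
    nlinarith [hj, hble]
  -- the chosen curve is an element of the defining set for qhDist
  have hmem_set : qhLength G γ L ∈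
      {l | ∃ γ' L', CurveIn G γ' L' x y ∧ qhLength G γ' L' = l} :=
    ⟨γ, L, ⟨hL0, hcurve.lip, hcurve.source, hcurve.target, hmemG⟩, rfl⟩
  have hbdd : BddBelow {l | ∃ γ' L', CurveIn G γ' L' x y ∧ qhLength G γ' L' = l} := by
    refine ⟨0, ?_⟩
    rintro l ⟨γ', L', hc', rfl⟩
    have : (0 : ℝ) ≤ ∫ u in (0 : ℝ)..L', 1 / bdist G (γ' u) := by
      apply intervalIntegral.integral_nonneg hc'.nonneg
      intro u _
      exact one_div_nonneg.2 Metric.infDist_nonneg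
    exact this
  -- bound the quasihyperbolic length
  have hval : qhLength G γ L ≤ L * (1 / (r - s)) := by
    show (∫ u in (0 : ℝ)..L, 1 / bdist G (γ u)) ≤ L * (1 / (r - s))
    have hint : IntervalIntegrable (fun u => 1 / bdist G (γ u))
        MeasureTheory.volume 0 L := by
      apply ContinuousOn.intervalIntegrable
      rw [Set.uIcc_of_le hL0]
      apply ContinuousOn.div continuousOn_const
      · exact (Metric.continuous_infDist_pt (frontier G)).comp_continuousOn hγc
      · intro u hu
        exact ne_of_gt (lt_of_lt_of_le hrs (hlow u hu))
    calc (∫ u in (0 : ℝ)..L, 1 / bdist G (γ u))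
        ≤ ∫ _u in (0 : ℝ)..L, 1 / (r - s) := by
          apply intervalIntegral.integral_mono_on hL0 hint intervalIntegrable_const
          intro u hu
          exact one_div_le_one_div_of_le hrs (hlow u hu)
      _ = L * (1 / (r - s)) := by
          simp [intervalIntegral.integral_const, smul_eq_mul]
  refine le_trans (csInf_le hbdd hmem_set) (le_trans hval ?_)
  -- final arithmetic
  have h1t : 0 < 1 - t := by linarith
  have ha0 : (0 : ℝ) < a := lt_of_lt_of_le one_pos ha
  rw [mul_one_div, div_le_div_iff₀ hrs h1t]
  have hseq : r - s = (1 - t) * r / 2 := by rw [hs]; ring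
  nlinarith [hLb, mul_pos hr0 h1t, mul_nonneg (mul_nonneg ha0.le hr0.le)
    (mul_nonneg h1t.le h1t.le), mul_le_mul_of_nonneg_right hLb h1t.le]
end

section
/- Suppose G ⊊ X is a b-uniform domain in a rectifiably connected metric space X. Then for any x, y ∈ G, k_G(x,y) ≤ 4b² log(1 + |x−y|/min{δ_G(x), δ_G(y)}). -/
open Metric Set Filter

/-- A rectifiably connected metric space. -/
def RectConn (X : Type*) [MetricSpace X] : Prop :=
  ∀ x y : X, ∃ γ L, CurveIn (Set.univ : Set X) γ L x y


section Stmt7Aux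

open Real MeasureTheory intervalIntegral

private lemma my_log_ge_half {w : ℝ} (hw0 : 0 ≤ w) (hw1 : w ≤ 1) :
    w / 2 ≤ Real.log (1 + w) := by
  have h1 : (0:ℝ) < 1 + w := by linarith
  have h := Real.log_le_sub_one_of_pos (inv_pos.mpr h1)
  rw [Real.log_inv] at h
  -- h : -log (1+w) ≤ (1+w)⁻¹ - 1
  have h2 : (1 + w)⁻¹ ≤ 1 - w / 2 := by
    rw [inv_le_iff_one_le_mul₀ h1]
    nlinarith
  linarith

private lemma my_bern {s p : ℝ} (hs : 0 ≤ s) (hp : 1 ≤ p) : 1 + p * s ≤ (1 + s) ^ p :=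
  one_add_mul_self_le_rpow_one_add (by linarith) hp

private lemma my_aux1 {b t : ℝ} (hb : 1 ≤ b) (ht : 2 / (b + 1) ≤ t) :
    Real.log (b + 1) ≤ b ^ 2 * Real.log (1 + t) := by
  have hb1 : (0:ℝ) < b + 1 := by linarith
  have hs : (0:ℝ) ≤ 2 / (b + 1) := by positivity
  have hp : (1:ℝ) ≤ b ^ 2 := by nlinarith
  have hB := my_bern hs hp
  have h1 : b + 1 ≤ 1 + b ^ 2 * (2 / (b + 1)) := by
    have h2 : b ≤ b ^ 2 * (2 / (b + 1)) := by
      rw [mul_div_assoc'] at *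
      rw [le_div_iff₀ hb1]
      nlinarith
    linarith
  have hlog : Real.log (b + 1) ≤ Real.log ((1 + 2 / (b + 1)) ^ (b ^ 2 : ℝ)) :=
    Real.log_le_log (by linarith) (le_trans h1 hB)
  rw [Real.log_rpow (by positivity)] at hlog
  have hmono : Real.log (1 + 2 / (b + 1)) ≤ Real.log (1 + t) :=
    Real.log_le_log (by positivity) (by linarith)
  calc Real.log (b + 1) ≤ b ^ 2 * Real.log (1 + 2 / (b + 1)) := hlog
    _ ≤ b ^ 2 * Real.log (1 + t) := by
        exact mul_le_mul_of_nonneg_left hmono (by positivity)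

private lemma my_aux2 {b t : ℝ} (hb : 1 ≤ b) (ht : 0 < t) :
    Real.log (t * (b + 1) / 2) ≤ b * Real.log (1 + t) := by
  have hB := my_bern ht.le hb
  have h2 : t * (b + 1) / 2 ≤ (1 + t) ^ (b : ℝ) := by nlinarith
  have h3 := Real.log_le_log (by positivity) h2
  rwa [Real.log_rpow (by linarith)] at h3

private lemma my_int_sub_inv {m a c : ℝ} (hac : a ≤ c) (hc : 0 < m - c) :
    ∫ u in a..c, (m - u)⁻¹ = Real.log ((m - a) / (m - c)) := by
  rw [intervalIntegral.integral_comp_sub_left (fun s : ℝ => s⁻¹) m]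
  exact integral_inv_of_pos hc (by linarith)

private lemma my_int_sub_inv' {e a c : ℝ} (h1 : 0 < a - e) (h2 : 0 < c - e) :
    ∫ u in a..c, (u - e)⁻¹ = Real.log ((c - e) / (a - e)) := by
  rw [intervalIntegral.integral_comp_sub_right (fun s : ℝ => s⁻¹) e]
  exact integral_inv_of_pos h1 h2

private lemma my_int_mono {F g : ℝ → ℝ} {a c : ℝ} (hac : a ≤ c)
    (hF : IntervalIntegrable F MeasureTheory.volume a c)
    (hg : ContinuousOn g (Set.Icc a c))
    (h : ∀ t ∈ Set.Icc a c, F t ≤ g t) :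
    ∫ u in a..c, F u ≤ ∫ u in a..c, g u :=
  intervalIntegral.integral_mono_on hac hF (hg.intervalIntegrable_of_Icc hac) h

end Stmt7Aux

set_option maxHeartbeats 2000000 in
/-- Lemma D: If `G` is a `b`-uniform proper domain in a rectifiably
connected metric space, then `k_G(x,y) ≤ 4b² log(1 + |x−y|/min{δ_G(x), δ_G(y)})`. -/
theorem stmt7 {X : Type*} [MetricSpace X] (hX : RectConn X)
    (G : Set X) (hG : IsProperDomain G) (b : ℝ) (hb : 1 ≤ b)
    (hGu : IsUniform b G) (x y : X) (hx : x ∈ G) (hy : y ∈ G) :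
    qhDist G x y ≤
      4 * b ^ 2 * Real.log (1 + dist x y / min (bdist G x) (bdist G y)) := by
  obtain ⟨hopen, hGconn, hne_univ⟩ := hG
  set d := dist x y with hd
  set m := min (bdist G x) (bdist G y) with hm
  have hb0 : (0:ℝ) < b := lt_of_lt_of_le one_pos hb
  have hb1 : (0:ℝ) < b + 1 := by linarith
  -- X is preconnected
  have hpc : PreconnectedSpace X := by
    refine ⟨isPreconnected_of_forall x fun z _ => ?_⟩
    obtain ⟨γ, L, hc⟩ := hX x z
    refine ⟨γ '' Set.Icc 0 L, Set.subset_univ _,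
      ⟨0, ⟨le_refl 0, hc.nonneg⟩, hc.source⟩,
      ⟨L, ⟨hc.nonneg, le_refl L⟩, hc.target⟩, ?_⟩
    exact isPreconnected_Icc.image γ hc.lip.continuousOn
  have hfr : (frontier G).Nonempty := by
    by_contra hfe
    rw [Set.not_nonempty_iff_eq_empty] at hfe
    exact hne_univ ((isClopen_iff_frontier_eq_empty.mpr hfe).eq_univ hGconn.nonempty)
  have hfc : IsClosed (frontier G) := isClosed_frontier
  have hbposG : ∀ z ∈ G, 0 < bdist G z := by
    intro z hz
    have hzn : z ∉ frontier G := fun hzf => hzf.2 (by rw [hopen.interior_eq]; exact hz)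
    exact (hfc.notMem_iff_infDist_pos hfr).mp hzn
  have hm0 : 0 < m := lt_min (hbposG x hx) (hbposG y hy)
  obtain ⟨γ, L, hc, hLb, hcone⟩ := hGu x hx y hy
  have hL0 : 0 ≤ L := hc.nonneg
  rw [← hd] at hLb
  have hdist_le : ∀ s ∈ Set.Icc (0:ℝ) L, ∀ t ∈ Set.Icc (0:ℝ) L,
      dist (γ s) (γ t) ≤ |s - t| := by
    intro s hs t ht
    have h := hc.lip.dist_le_mul s hs t ht
    simpa [Real.dist_eq] using h
  have hbd_lip : ∀ z w : X, bdist G z ≤ bdist G w + dist z w := by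
    intro z w
    have h := (Metric.lipschitz_infDist_pt (frontier G)).dist_le_mul z w
    rw [NNReal.coe_one, one_mul, Real.dist_eq] at h
    have h2 := (abs_le.mp h).2
    unfold bdist
    linarith
  have hpos : ∀ t ∈ Set.Icc (0:ℝ) L, 0 < bdist G (γ t) :=
    fun t ht => hbposG _ (hc.mem t ht)
  have hlow1 : ∀ t ∈ Set.Icc (0:ℝ) L, m - t ≤ bdist G (γ t) := by
    intro t ht
    have h1 : bdist G x ≤ bdist G (γ t) + dist x (γ t) := hbd_lip x (γ t)
    have h2 : dist x (γ t) ≤ |0 - t| := by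
      rw [← hc.source]; exact hdist_le 0 ⟨le_refl 0, hL0⟩ t ht
    rw [zero_sub, abs_neg, abs_of_nonneg ht.1] at h2
    have h3 : m ≤ bdist G x := min_le_left _ _
    linarith
  have hlow2 : ∀ t ∈ Set.Icc (0:ℝ) L, m - (L - t) ≤ bdist G (γ t) := by
    intro t ht
    have h1 : bdist G y ≤ bdist G (γ t) + dist y (γ t) := hbd_lip y (γ t)
    have h2 : dist y (γ t) ≤ |L - t| := by
      rw [← hc.target]; exact hdist_le L ⟨hL0, le_refl L⟩ t ht
    rw [abs_of_nonneg (by linarith [ht.2])] at h2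
    have h3 : m ≤ bdist G y := min_le_right _ _
    linarith
  have hdL : d ≤ L := by
    have h := hdist_le 0 ⟨le_refl 0, hL0⟩ L ⟨hL0, le_refl L⟩
    rw [hc.source, hc.target, zero_sub, abs_neg, abs_of_nonneg hL0] at h
    exact h
  -- qhDist is at most the qh-length of γ
  have hqle : qhDist G x y ≤ ∫ u in (0:ℝ)..L, 1 / bdist G (γ u) := by
    have hmem : qhLength G γ L ∈
        {l | ∃ γ' L', CurveIn G γ' L' x y ∧ qhLength G γ' L' = l} := ⟨γ, L, hc, rfl⟩
    have hbdd : BddBelow {l | ∃ γ' L', CurveIn G γ' L' x y ∧ qhLength G γ' L' = l} := by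
      refine ⟨0, ?_⟩
      rintro l ⟨γ', L', hc', rfl⟩
      exact intervalIntegral.integral_nonneg hc'.nonneg fun u _ =>
        div_nonneg zero_le_one Metric.infDist_nonneg
    exact csInf_le hbdd hmem
  set F : ℝ → ℝ := fun u => 1 / bdist G (γ u) with hF
  have hFcont : ContinuousOn F (Set.Icc 0 L) := by
    have h1 : ContinuousOn (fun u => bdist G (γ u)) (Set.Icc 0 L) :=
      (Metric.continuous_infDist_pt (frontier G)).comp_continuousOn hc.lip.continuousOn
    exact continuousOn_const.div h1 fun t ht => ne_of_gt (hpos t ht)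
  have hFint : ∀ a₁ a₂ : ℝ, 0 ≤ a₁ → a₁ ≤ a₂ → a₂ ≤ L →
      IntervalIntegrable F MeasureTheory.volume a₁ a₂ := by
    intro a₁ a₂ h1 h2 h3
    apply ContinuousOn.intervalIntegrable
    apply hFcont.mono
    rw [Set.uIcc_of_le h2]
    exact Set.Icc_subset_Icc h1 h3
  set s0 : ℝ := b * m / (b + 1) with hs0
  have hs0pos : 0 < s0 := by positivity
  have hs0m : s0 < m := by
    rw [hs0, div_lt_iff₀ hb1]; nlinarith
  have hms0 : m - s0 = m / (b + 1) := by
    rw [hs0]; field_simp; ring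
  rcases le_total (L / 2) s0 with hcase | hcase
  · -- Case 1 : L/2 ≤ s0
    have hml : 0 < m - L / 2 := by linarith
    have hc1 : L / 2 * (b + 1) ≤ b * m := by
      have hcase' : L / 2 ≤ b * m / (b + 1) := by rw [← hs0]; exact hcase
      exact (le_div_iff₀ hb1).mp hcase'
    have hIa : ∫ u in (0:ℝ)..(L/2), F u ≤ Real.log (m / (m - L/2)) := by
      have h1 : ∫ u in (0:ℝ)..(L/2), F u ≤ ∫ u in (0:ℝ)..(L/2), (m - u)⁻¹ := by
        refine my_int_mono (by linarith) (hFint 0 (L/2) le_rfl (by linarith) (by linarith))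
          (ContinuousOn.inv₀ (continuousOn_const.sub continuousOn_id)
            fun t ht => by rcases ht with ⟨ht1, ht2⟩; intro hzero; nlinarith) ?_
        intro t ht
        simp only [hF]
        rw [← one_div]
        exact one_div_le_one_div_of_le (by nlinarith [ht.1, ht.2])
          (hlow1 t ⟨ht.1, by linarith [ht.2]⟩)
      rw [my_int_sub_inv (by linarith) hml] at h1
      simpa using h1
    have hIb : ∫ u in (L/2)..L, F u ≤ Real.log (m / (m - L/2)) := by
      have h1 : ∫ u in (L/2)..L, F u ≤ ∫ u in (L/2)..L, (u - (L - m))⁻¹ := by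
        refine my_int_mono (by linarith) (hFint (L/2) L (by linarith) (by linarith) le_rfl)
          (ContinuousOn.inv₀ (continuousOn_id.sub continuousOn_const)
            fun t ht => by rcases ht with ⟨ht1, ht2⟩; intro hzero; nlinarith) ?_
        intro t ht
        simp only [hF]
        rw [← one_div]
        have h2 := hlow2 t ⟨by linarith [ht.1], ht.2⟩
        exact one_div_le_one_div_of_le (by nlinarith [ht.1, ht.2]) (by linarith)
      rw [my_int_sub_inv' (by linarith) (by linarith)] at h1
      have he : L - (L - m) = m := by ring
      have he2 : L / 2 - (L - m) = m - L / 2 := by ring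
      rw [he, he2] at h1
      exact h1
    have hsplit : ∫ u in (0:ℝ)..L, F u =
        (∫ u in (0:ℝ)..(L/2), F u) + ∫ u in (L/2)..L, F u :=
      (intervalIntegral.integral_add_adjacent_intervals
        (hFint 0 (L/2) le_rfl (by linarith) (by linarith))
        (hFint (L/2) L (by linarith) (by linarith) le_rfl)).symm
    have htot : qhDist G x y ≤ 2 * Real.log (m / (m - L/2)) := by
      rw [hsplit] at hqle
      linarith
    -- final numeric estimate, case 1
    have key1 : Real.log (m / (m - L/2)) ≤ (b + 1) * L / (2 * m) := by
      have h1 := Real.log_le_sub_one_of_pos (show (0:ℝ) < m / (m - L/2) by positivity)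
      have h2 : m / (m - L/2) - 1 ≤ (b + 1) * L / (2 * m) := by
        rw [div_sub_one (by linarith), div_le_div_iff₀ (by linarith) (by positivity)]
        nlinarith [hc1]
      linarith
    have hLbm : L ≤ b * m := by nlinarith [hc1, hL0]
    have hw1 : L / (b * m) ≤ 1 := (div_le_one (by positivity)).mpr hLbm
    have hw0 : 0 ≤ L / (b * m) := by positivity
    have e1 : L / (b * m) / 2 ≤ Real.log (1 + d / m) := by
      refine le_trans (my_log_ge_half hw0 hw1) (Real.log_le_log (by positivity) ?_)
      have : L / (b * m) ≤ d / m := by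
        rw [div_le_div_iff₀ (by positivity) hm0]
        nlinarith [mul_le_mul_of_nonneg_right hLb hm0.le]
      linarith
    have e2 : 2 * ((b + 1) * L / (2 * m)) ≤ 4 * b ^ 2 * (L / (b * m) / 2) := by
      have hdiff : 4 * b ^ 2 * (L / (b * m) / 2) - 2 * ((b + 1) * L / (2 * m)) =
          (b - 1) * L / m := by
        field_simp
        ring
      have hnn : 0 ≤ (b - 1) * L / m := by
        apply div_nonneg _ hm0.le
        exact mul_nonneg (by linarith) hL0
      linarith
    calc qhDist G x y ≤ 2 * Real.log (m / (m - L/2)) := htot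
      _ ≤ 2 * ((b + 1) * L / (2 * m)) := by linarith
      _ ≤ 4 * b ^ 2 * (L / (b * m) / 2) := e2
      _ ≤ 4 * b ^ 2 * Real.log (1 + d / m) := by
          exact mul_le_mul_of_nonneg_left e1 (by positivity)
  · -- Case 2 : s0 ≤ L/2
    have hLs0 : 2 * s0 ≤ L := by linarith
    have hms0pos : 0 < m - s0 := by linarith
    have hc1 : b * m ≤ L / 2 * (b + 1) := by
      have hcase' : b * m / (b + 1) ≤ L / 2 := by rw [← hs0]; exact hcase
      exact (div_le_iff₀ hb1).mp hcase'
    have hdpos : 0 < d := by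
      have : 0 < L := by linarith
      nlinarith [hLb]
    -- the four integral bounds
    have hIA : ∫ u in (0:ℝ)..s0, F u ≤ Real.log (m / (m - s0)) := by
      have h1 : ∫ u in (0:ℝ)..s0, F u ≤ ∫ u in (0:ℝ)..s0, (m - u)⁻¹ := by
        refine my_int_mono hs0pos.le (hFint 0 s0 le_rfl hs0pos.le (by linarith))
          (ContinuousOn.inv₀ (continuousOn_const.sub continuousOn_id)
            fun t ht => by rcases ht with ⟨ht1, ht2⟩; intro hzero; nlinarith) ?_
        intro t ht
        simp only [hF]
        rw [← one_div]
        exact one_div_le_one_div_of_le (by nlinarith [ht.1, ht.2])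
          (hlow1 t ⟨ht.1, by linarith [ht.2]⟩)
      rw [my_int_sub_inv hs0pos.le hms0pos] at h1
      simpa using h1
    have hIB : ∫ u in s0..(L/2), F u ≤ b * Real.log ((L/2) / s0) := by
      have h1 : ∫ u in s0..(L/2), F u ≤ ∫ u in s0..(L/2), b * u⁻¹ := by
        refine my_int_mono hcase (hFint s0 (L/2) hs0pos.le hcase (by linarith))
          (continuousOn_const.mul (ContinuousOn.inv₀ continuousOn_id
            fun t ht => by rcases ht with ⟨ht1, ht2⟩; intro hzero; nlinarith)) ?_
        intro t ht
        have hmin : min t (L - t) = t := min_eq_left (by linarith [ht.2])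
        have hco := hcone t ⟨by linarith [ht.1], by linarith [ht.2]⟩
        rw [hmin] at hco
        have htpos : 0 < t := lt_of_lt_of_le hs0pos ht.1
        have hge : t / b ≤ bdist G (γ t) := (div_le_iff₀' hb0).mpr hco
        have h2 : (1:ℝ) / bdist G (γ t) ≤ 1 / (t / b) :=
          one_div_le_one_div_of_le (by positivity) hge
        rw [one_div_div] at h2
        rw [hF]
        calc 1 / bdist G (γ t) ≤ b / t := h2
          _ = b * t⁻¹ := by rw [div_eq_mul_inv]
      rw [intervalIntegral.integral_const_mul, integral_inv_of_pos hs0pos (by linarith)] at h1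
      exact h1
    have hIC : ∫ u in (L/2)..(L - s0), F u ≤ b * Real.log ((L/2) / s0) := by
      have h1 : ∫ u in (L/2)..(L - s0), F u ≤ ∫ u in (L/2)..(L - s0), b * (L - u)⁻¹ := by
        refine my_int_mono (by linarith) (hFint (L/2) (L - s0) (by linarith) (by linarith) (by linarith))
          (continuousOn_const.mul (ContinuousOn.inv₀ (continuousOn_const.sub continuousOn_id)
            fun t ht => by rcases ht with ⟨ht1, ht2⟩; intro hzero; nlinarith)) ?_
        intro t ht
        have hmin : min t (L - t) = L - t := min_eq_right (by linarith [ht.1])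
        have hco := hcone t ⟨by linarith [ht.1], by linarith [ht.2]⟩
        rw [hmin] at hco
        have htpos : 0 < L - t := by nlinarith [ht.2]
        have hge : (L - t) / b ≤ bdist G (γ t) := (div_le_iff₀' hb0).mpr hco
        have h2 : (1:ℝ) / bdist G (γ t) ≤ 1 / ((L - t) / b) :=
          one_div_le_one_div_of_le (by positivity) hge
        rw [one_div_div] at h2
        rw [hF]
        calc 1 / bdist G (γ t) ≤ b / (L - t) := h2
          _ = b * (L - t)⁻¹ := by rw [div_eq_mul_inv]
      rw [intervalIntegral.integral_const_mul,
        my_int_sub_inv (m := L) (by linarith) (by linarith)] at h1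
      have he1 : L - L / 2 = L / 2 := by ring
      have he2 : L - (L - s0) = s0 := by ring
      rw [he1, he2] at h1
      exact h1
    have hID : ∫ u in (L - s0)..L, F u ≤ Real.log (m / (m - s0)) := by
      have h1 : ∫ u in (L - s0)..L, F u ≤ ∫ u in (L - s0)..L, (u - (L - m))⁻¹ := by
        refine my_int_mono (by linarith) (hFint (L - s0) L (by linarith) (by linarith) le_rfl)
          (ContinuousOn.inv₀ (continuousOn_id.sub continuousOn_const)
            fun t ht => by rcases ht with ⟨ht1, ht2⟩; intro hzero; nlinarith) ?_
        intro t ht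
        simp only [hF]
        rw [← one_div]
        have h2 := hlow2 t ⟨by linarith [ht.1], ht.2⟩
        exact one_div_le_one_div_of_le (by nlinarith [ht.1, ht.2]) (by linarith)
      rw [my_int_sub_inv' (by linarith) (by linarith)] at h1
      have he : L - (L - m) = m := by ring
      have he2 : L - s0 - (L - m) = m - s0 := by ring
      rw [he, he2] at h1
      exact h1
    -- combine
    have hi1 := hFint 0 s0 le_rfl hs0pos.le (by linarith)
    have hi2 := hFint s0 (L/2) hs0pos.le hcase (by linarith)
    have hi3 := hFint (L/2) (L - s0) (by linarith) (by linarith) (by linarith)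
    have hi4 := hFint (L - s0) L (by linarith) (by linarith) le_rfl
    have hsplit : ∫ u in (0:ℝ)..L, F u =
        (∫ u in (0:ℝ)..s0, F u) + (∫ u in s0..(L/2), F u) +
        (∫ u in (L/2)..(L - s0), F u) + ∫ u in (L - s0)..L, F u := by
      have e1 := intervalIntegral.integral_add_adjacent_intervals hi3 hi4
      have e2 := intervalIntegral.integral_add_adjacent_intervals hi2 (hi3.trans hi4)
      have e3 := intervalIntegral.integral_add_adjacent_intervals hi1 ((hi2.trans hi3).trans hi4)
      linarith
    have htot : qhDist G x y ≤
        2 * Real.log (m / (m - s0)) + 2 * (b * Real.log ((L/2) / s0)) := by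
      rw [hsplit] at hqle
      linarith
    -- log (m/(m-s0)) = log (b+1)
    have hlogK : Real.log (m / (m - s0)) = Real.log (b + 1) := by
      rw [hms0]
      congr 1
      field_simp
    -- bound log ((L/2)/s0)
    set t : ℝ := d / m with hT
    have htpos : 0 < t := hT ▸ div_pos hdpos hm0
    have ht2 : 2 / (b + 1) ≤ t := by
      rw [hT, div_le_div_iff₀ hb1 hm0]
      nlinarith [hc1, mul_le_mul_of_nonneg_right hLb hb1.le, hb0]
    have harg : Real.log ((L/2) / s0) ≤ Real.log (t * (b + 1) / 2) := by
      apply Real.log_le_log (div_pos (by linarith) hs0pos)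
      rw [div_le_iff₀ hs0pos, hs0, hT]
      have e : d / m * (b + 1) / 2 * (b * m / (b + 1)) = b * d / 2 := by
        field_simp
      rw [e]
      linarith
    have hA1 := my_aux1 hb ht2
    have hA2 := my_aux2 hb htpos
    have hbound : 2 * Real.log (m / (m - s0)) + 2 * (b * Real.log ((L/2) / s0)) ≤
        4 * b ^ 2 * Real.log (1 + t) := by
      rw [hlogK]
      have h1 : b * Real.log ((L/2) / s0) ≤ b * (b * Real.log (1 + t)) :=
        mul_le_mul_of_nonneg_left (le_trans harg hA2) hb0.le
      nlinarith [hA1]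
    calc qhDist G x y ≤ 2 * Real.log (m / (m - s0)) + 2 * (b * Real.log ((L/2) / s0)) := htot
      _ ≤ 4 * b ^ 2 * Real.log (1 + t) := hbound
      _ = 4 * b ^ 2 * Real.log (1 + d / m) := by rw [hT]
end

section
/- Suppose X is a c-quasiconvex metric space and f : X → Y is a weakly H-quasisymmetric homeomorphism. If x, y, z are distinct points in X with |y−x| ≤ t|z−x| for some t > 0, then |f(y)−f(x)| ≤ θ(t)·|f(z)−f(x)|, where θ = θ_{c,H} : (0,∞) → (0,∞) is an increasing function depending only on c and H. -/
open Metric Set Filter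

/-- Lemma G: For each `c ≥ 1`, `H ≥ 1` there is an increasing
function `θ = θ_{c,H} : (0,∞) → (0,∞)` such that whenever `f : X → Y` is a
weakly `H`-quasisymmetric homeomorphism of a `c`-quasiconvex space `X`, and
`x, y, z` are distinct points of `X` with `|y−x| ≤ t|z−x|`, then
`|f(y)−f(x)| ≤ θ(t)|f(z)−f(x)|`. -/
theorem stmt11 (c H : ℝ) (hc : 1 ≤ c) (hH : 1 ≤ H) :
    ∃ θ : ℝ → ℝ, MonotoneOn θ (Set.Ioi 0) ∧ (∀ t, 0 < t → 0 < θ t) ∧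
      ∀ (X Y : Type) [MetricSpace X] [MetricSpace Y], QCSpace c X →
        ∀ f : X ≃ₜ Y, WeakQS H (⇑f) →
          ∀ x y z : X, x ≠ y → x ≠ z → y ≠ z →
            ∀ t : ℝ, 0 < t → dist y x ≤ t * dist z x →
              dist (f y) (f x) ≤ θ t * dist (f z) (f x) :=  by
  refine ⟨fun t => (1 + H) ^ ⌈2 * c * t⌉₊, ?_, ?_, ?_⟩
  · intro a _ b _ hab
    have h1 : (1:ℝ) ≤ 1 + H := by linarith
    exact pow_le_pow_right₀ h1 (Nat.ceil_le_ceil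
      (mul_le_mul_of_nonneg_left hab (by positivity)))
  · intro t _
    positivity
  · intro X Y _ _ hQC f hf x y z hxy hxz hyz t ht hty
    set D : ℝ := dist (f z) (f x) with hD
    have hDnn : 0 ≤ D := dist_nonneg
    have hd : 0 < dist z x := dist_pos.mpr (Ne.symm hxz)
    set d : ℝ := dist z x with hddef
    obtain ⟨γ, L, hcurve, hL⟩ := hQC x y
    set s : ℝ := d / 2 with hsdef
    have hs : 0 < s := by positivity
    set k : ℕ := ⌈2 * c * t⌉₊ with hk
    have hLk : L ≤ k * s := by
      have h1 : 2 * c * t ≤ (k : ℝ) := Nat.le_ceil _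
      have h2 : L ≤ c * dist x y := hL
      have h3 : dist x y ≤ t * d := by rw [dist_comm]; exact hty
      have hc0 : (0:ℝ) ≤ c := by linarith
      calc L ≤ c * dist x y := h2
        _ ≤ c * (t * d) := by nlinarith
        _ = (2 * c * t) * s := by rw [hsdef]; ring
        _ ≤ (k : ℝ) * s := by nlinarith
    -- the chain points
    set yy : ℕ → X := fun j => γ (min (j * s) L) with hyy
    have hmem : ∀ j : ℕ, min ((j:ℝ) * s) L ∈ Set.Icc (0:ℝ) L := by
      intro j
      constructor
      · exact le_min (by positivity) hcurve.nonneg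
      · exact min_le_right _ _
    have hy0 : yy 0 = x := by
      have : min ((0:ℕ) * s : ℝ) L = 0 := by
        simp [hcurve.nonneg]
      rw [hyy]; simp only [this]; exact hcurve.source
    have hyk : yy k = y := by
      have : min ((k:ℝ) * s) L = L := min_eq_right hLk
      rw [hyy]; simp only [this]; exact hcurve.target
    have hstep : ∀ j : ℕ, dist (yy j) (yy (j+1)) ≤ s := by
      intro j
      have hlip := hcurve.lip.dist_le_mul _ (hmem j) _ (hmem (j+1))
      have hle : min ((j:ℝ) * s) L ≤ min (((j:ℕ)+1 : ℕ) * s : ℝ) L := by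
        apply min_le_min _ le_rfl
        push_cast
        nlinarith
      have hdiff : min (((j:ℕ)+1 : ℕ) * s : ℝ) L - min ((j:ℝ) * s) L ≤ s := by
        have h1 : min (((j:ℕ)+1 : ℕ) * s : ℝ) L ≤ (j:ℝ) * s + s := by
          apply le_trans (min_le_left _ _)
          push_cast; nlinarith
        rcases le_or_gt ((j:ℝ) * s) L with h | h
        · rw [min_eq_left h]; linarith
        · have hmr : min ((j:ℝ)*s) L = L := min_eq_right (le_of_lt h)
          have hmr2 : min (((j:ℕ)+1 : ℕ) * s : ℝ) L ≤ L := min_le_right _ _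
          rw [hmr]
          linarith
      have hlip' : dist (yy j) (yy (j+1)) ≤ dist (min ((j:ℝ)*s) L) (min (((j:ℕ)+1:ℕ)*s : ℝ) L) := by
        simpa [hyy] using hlip
      calc dist (yy j) (yy (j+1)) ≤ dist (min ((j:ℝ)*s) L) (min (((j:ℕ)+1:ℕ)*s : ℝ) L) := hlip'
        _ ≤ s := by
            rw [Real.dist_eq, abs_sub_comm, abs_of_nonneg (by linarith)]
            exact hdiff
    -- key inequality for each step
    have hkey : ∀ j : ℕ, dist (f (yy j)) (f (yy (j+1))) ≤ H * (dist (f (yy j)) (f x) + D) := by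
      intro j
      rcases le_or_gt (dist (yy j) (yy (j+1))) (dist (yy j) x) with h | h
      · have := hf (yy j) (yy (j+1)) x h
        have hHnn : (0:ℝ) ≤ H := by linarith
        nlinarith [dist_nonneg (x := f (yy j)) (y := f x)]
      · have hjx : dist (yy j) x < s := lt_of_lt_of_le h (hstep j)
        have hjz : dist (yy j) (yy (j+1)) ≤ dist (yy j) z := by
          have htri : d ≤ dist (yy j) x + dist (yy j) z := by
            rw [hddef, dist_comm z x]
            calc dist x z ≤ dist x (yy j) + dist (yy j) z := dist_triangle _ _ _
              _ = dist (yy j) x + dist (yy j) z := by rw [dist_comm x (yy j)]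
          have : s < dist (yy j) z := by
            have : d = 2 * s := by rw [hsdef]; ring
            linarith
          linarith [hstep j]
        have h2 := hf (yy j) (yy (j+1)) z hjz
        have h3 : dist (f (yy j)) (f z) ≤ dist (f (yy j)) (f x) + D := by
          calc dist (f (yy j)) (f z) ≤ dist (f (yy j)) (f x) + dist (f x) (f z) := dist_triangle _ _ _
            _ = dist (f (yy j)) (f x) + D := by rw [hD, dist_comm (f x) (f z)]
        have hHnn : (0:ℝ) ≤ H := by linarith
        calc dist (f (yy j)) (f (yy (j+1))) ≤ H * dist (f (yy j)) (f z) := h2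
          _ ≤ H * (dist (f (yy j)) (f x) + D) := by nlinarith
    -- induction
    have hind : ∀ j : ℕ, dist (f (yy j)) (f x) ≤ ((1 + H) ^ j - 1) * D := by
      intro j
      induction j with
      | zero => simp [hy0]
      | succ n ih =>
        have h1 : dist (f (yy (n+1))) (f x) ≤ dist (f (yy n)) (f (yy (n+1))) + dist (f (yy n)) (f x) := by
          calc dist (f (yy (n+1))) (f x) ≤ dist (f (yy (n+1))) (f (yy n)) + dist (f (yy n)) (f x) := dist_triangle _ _ _
            _ = dist (f (yy n)) (f (yy (n+1))) + dist (f (yy n)) (f x) := by rw [dist_comm (f (yy (n+1)))]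
        have h2 := hkey n
        have hHnn : (0:ℝ) ≤ H := by linarith
        have hpow : (1:ℝ) ≤ (1 + H) ^ n := one_le_pow₀ (by linarith)
        have : dist (f (yy (n+1))) (f x) ≤ (1 + H) * dist (f (yy n)) (f x) + H * D := by
          nlinarith [dist_nonneg (x := f (yy n)) (y := f x)]
        calc dist (f (yy (n+1))) (f x) ≤ (1 + H) * dist (f (yy n)) (f x) + H * D := this
          _ ≤ (1 + H) * (((1 + H) ^ n - 1) * D) + H * D := by nlinarith
          _ = ((1 + H) ^ (n+1) - 1) * D := by ring
    have hfinal := hind k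
    rw [hyk] at hfinal
    have hpow : (1:ℝ) ≤ (1 + H) ^ k := one_le_pow₀ (by linarith)
    calc dist (f y) (f x) ≤ ((1 + H) ^ k - 1) * D := hfinal
      _ ≤ (1 + H) ^ k * D := by nlinarith
end
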